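/- arXiv:2404.19078 — 10 statements merged into one kernel-verified Lean document; each statement's English description precedes it below -/
import Mathlib

section
/- For every integer d ≥ 1, the number of basal billiard partitions with exactly d parts equals f_d, where f_0 = 1, f_1 = 1 and f_d = f_{d−1} + f_{d−2}. -/
/-- An Euclidean billiard partition, recorded as the strictly decreasing list
`m₁ > m₂ > ⋯ > m_d` of its parts: a nonempty strictly decreasing list of positive
integers whose smallest (last) part is even and in which no two adjacent parts
are both odd. -/
def IsEBP (l : List ℕ) : Prop :=
  l ≠ [] ∧ l.Chain' (fun a b => b < a) ∧ (∀ x ∈ l, 0 < x) ∧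
    (∀ m ∈ l.getLast?, Even m) ∧ l.Chain' (fun a b => ¬(Odd a ∧ Odd b))

/-- A basal billiard partition: an Euclidean billiard partition whose smallest
part equals `2` and in which adjacent parts differ by at most `2`. -/
def IsBasal (l : List ℕ) : Prop :=
  IsEBP l ∧ l.getLast? = some 2 ∧ l.Chain' (fun a b => a - b ≤ 2)

/-!
Read from the smallest part upwards, a basal billiard partition is a walk starting at `2` whose
steps are `+1`, or `+2` from an even part: a step of `2` preserves parity, so it may not leave an
odd part. An odd part is thus forced to step to an even one, while an even part may go either way,
so the numbers of such walks with `d + 1` parts starting at an odd and at an even part satisfy the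
Fibonacci recursion, with values `fib (d + 1)` and `fib (d + 2)`.
-/

def BasalStep (a b : ℕ) : Prop := b = a + 1 ∨ (b = a + 2 ∧ Even a)

theorem basalStep_iff {a b : ℕ} : BasalStep b a ↔ b < a ∧ ¬(Odd a ∧ Odd b) ∧ a - b ≤ 2 := by
  simp only [BasalStep, Nat.odd_iff, Nat.even_iff]
  omega

theorem List.isChain_and {α : Type*} {R S : α → α → Prop} {l : List α} :
    l.IsChain (fun a b => R a b ∧ S a b) ↔ l.IsChain R ∧ l.IsChain S := by
  simp only [List.isChain_iff_getElem, ← forall_and]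

theorem List.IsChain.head_le_of_mem {α : Type*} [Preorder α] {l : List α} {m x : α}
    (hl : l.IsChain (· ≤ ·)) (hm : l.head? = some m) (hx : x ∈ l) : m ≤ x :=
  hl.induction (m ≤ ·) l (fun _ _ hyz hy => hy.trans hyz)
    (fun lne => (Option.some_injective _ (hm.symm.trans (List.head?_eq_some_head lne))).le) x hx

theorem isBasal_iff_reverse (l : List ℕ) :
    IsBasal l ↔ l.reverse.head? = some 2 ∧ l.reverse.IsChain BasalStep := by
  have hsplit : l.IsChain (fun a b => BasalStep b a) ↔ l.IsChain (fun a b => b < a) ∧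
      l.IsChain (fun a b => ¬(Odd a ∧ Odd b)) ∧ l.IsChain (fun a b => a - b ≤ 2) := by
    simp only [basalStep_iff, List.isChain_and]
  rw [List.isChain_reverse, List.head?_reverse, hsplit]
  constructor
  · rintro ⟨⟨-, hlt, -, -, hodd⟩, hlast, hdiff⟩
    exact ⟨hlast, hlt, hodd, hdiff⟩
  · rintro ⟨hlast, hlt, hodd, hdiff⟩
    have htwo_le : ∀ x ∈ l, 2 ≤ x := fun x hx =>
      ((List.isChain_reverse.2 hlt).imp fun _ _ h => h.le).head_le_of_mem
        (List.head?_reverse ▸ hlast) (List.mem_reverse.2 hx)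
    refine ⟨⟨?_, hlt, fun x hx => (htwo_le x hx).trans_lt' two_pos, ?_, hodd⟩, hlast, hdiff⟩
    · rintro rfl
      simp at hlast
    · simp [hlast]

def basalChains : ℕ → ℕ → Finset (List ℕ)
  | a, 0 => {[a]}
  | a, d + 1 => (basalChains (a + 1) d ∪ if Even a then basalChains (a + 2) d else ∅).image
      (List.cons a)

theorem mem_basalChains {a d : ℕ} {l : List ℕ} :
    l ∈ basalChains a d ↔ l.length = d + 1 ∧ l.head? = some a ∧ l.IsChain BasalStep := by
  induction d generalizing a l with
  | zero =>
    rcases l with _ | ⟨x, _ | ⟨y, t⟩⟩ <;> simp [basalChains, eq_comm]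
  | succ d ih =>
    rcases l with _ | ⟨x, t⟩
    · simp [basalChains]
    · simp only [basalChains, Finset.mem_image, Finset.mem_union, List.cons.injEq]
      rcases t with _ | ⟨y, t⟩ <;> split_ifs <;> simp only [ih] <;> grind [BasalStep]

theorem disjoint_basalChains {a b : ℕ} (hab : a ≠ b) (d : ℕ) :
    Disjoint (basalChains a d) (basalChains b d) :=
  Finset.disjoint_left.2 fun _ ha hb => hab <| Option.some_injective _ <|
    (mem_basalChains.1 ha).2.1.symm.trans (mem_basalChains.1 hb).2.1

theorem card_basalChains (a d : ℕ) :
    (basalChains a d).card = if Even a then Nat.fib (d + 2) else Nat.fib (d + 1) := by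
  induction d generalizing a with
  | zero => split_ifs <;> rfl
  | succ d ih =>
    rw [basalChains, Finset.card_image_of_injective _ List.cons_injective]
    by_cases ha : Even a
    · have hodd : ¬Even (a + 1) := Nat.not_even_iff_odd.2 ha.add_one
      have heven : Even (a + 2) := ha.add even_two
      rw [if_pos ha, if_pos ha, Finset.card_union_of_disjoint (disjoint_basalChains (by omega) d),
        ih, ih, if_neg hodd, if_pos heven, Nat.fib_add_two (n := d + 1)]
    · have heven : Even (a + 1) := (Nat.not_even_iff_odd.1 ha).add_one
      rw [if_neg ha, if_neg ha, Finset.union_empty, ih, if_pos heven]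

theorem eq_fib_succ_of_rec {f : ℕ → ℕ} (h0 : f 0 = 1) (h1 : f 1 = 1)
    (hrec : ∀ n, f (n + 2) = f (n + 1) + f n) (n : ℕ) : f n = Nat.fib (n + 1) := by
  induction n using Nat.twoStepInduction with
  | zero => exact h0
  | one => exact h1
  | more n ih ih' => rw [hrec, ih, ih', Nat.fib_add_two (n := n + 1), add_comm]

/-- For every `d ≥ 1`, the number of basal billiard partitions with exactly `d`
parts equals `f d`, where `f 0 = 1`, `f 1 = 1`, `f (d+2) = f (d+1) + f d`. -/
theorem number_of_basal_billiard_partitions (f : ℕ → ℕ)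
    (h0 : f 0 = 1) (h1 : f 1 = 1) (hrec : ∀ n, f (n + 2) = f (n + 1) + f n) :
    ∀ d : ℕ, 1 ≤ d → {l : List ℕ | IsBasal l ∧ l.length = d}.ncard = f d := by
  intro d hd
  obtain ⟨d, rfl⟩ := Nat.exists_eq_add_of_le' hd
  have hset : {l : List ℕ | IsBasal l ∧ l.length = d + 1} =
      List.reverse ⁻¹' (basalChains 2 d : Set (List ℕ)) := by
    ext l
    simp only [Set.mem_ofPred_eq, Set.mem_preimage, Finset.mem_coe, mem_basalChains,
      isBasal_iff_reverse, List.length_reverse]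
    tauto
  rw [hset, Set.ncard_preimage_of_injective_subset_range List.reverse_injective
      (List.reverse_surjective.range_eq ▸ Set.subset_univ _),
    Set.ncard_coe_finset, card_basalChains, if_pos even_two, eq_fib_succ_of_rec h0 h1 hrec]
end

section
/- For every integer d ≥ 1, the number of basal billiard partitions with exactly d parts whose largest part is an even number equals f_{d−1}, where f_0 = 1, f_1 = 1 and f_d = f_{d−1} + f_{d−2}. -/
/-! Below its largest part `a`, an even-headed basal partition with at least two parts continues
either with the even part `a - 2`, or with the odd part `a - 1` followed by the even part `a - 2`
(an odd part is never last, since the last part is `2`, and is followed by an even part). Stripping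
these top parts splits the even-headed basal partitions with `d + 2` parts bijectively into those
with `d + 1` parts and those with `d` parts, so their numbers are the Fibonacci numbers
`0, 1, 1, 2, …`, the only one-part partition being `[2]`. -/

lemma isBasal_singleton {a : ℕ} : IsBasal [a] ↔ a = 2 := by
  simp only [IsBasal, IsEBP, List.Chain', List.isChain_singleton, List.getLast?_singleton,
    Option.some.injEq, eq_comm (a := a)]
  exact ⟨And.left ∘ And.right, by rintro rfl; decide⟩

lemma isBasal_cons_cons {a b : ℕ} {t : List ℕ} :
    IsBasal (a :: b :: t) ↔ IsBasal (b :: t) ∧ b < a ∧ a - b ≤ 2 ∧ ¬(Odd a ∧ Odd b) := by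
  simp only [IsBasal, IsEBP, List.Chain', List.isChain_cons_cons, List.getLast?_cons_cons,
    List.mem_cons, forall_eq_or_imp, ne_eq, reduceCtorEq, not_false_eq_true, true_and]
  constructor
  · rintro ⟨⟨⟨hlt, hc⟩, ⟨-, hpos⟩, hlast, hodd, hco⟩, hl2, hd, hcd⟩
    exact ⟨⟨⟨hc, hpos, hlast, hco⟩, hl2, hcd⟩, hlt, hd, hodd⟩
  · rintro ⟨⟨⟨hc, hpos, hlast, hco⟩, hl2, hcd⟩, hlt, hd, hodd⟩
    exact ⟨⟨⟨hlt, hc⟩, ⟨by omega, hpos⟩, hlast, hodd, hco⟩, hl2, hd, hcd⟩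

def evenBasal (d : ℕ) : Set (List ℕ) :=
  {l | IsBasal l ∧ l.length = d ∧ ∃ m, l.head? = some m ∧ Even m}

lemma cons_mem_evenBasal {a d : ℕ} {t : List ℕ} :
    a :: t ∈ evenBasal d ↔ IsBasal (a :: t) ∧ t.length + 1 = d ∧ Even a := by
  simp [evenBasal]

lemma exists_cons_of_mem_evenBasal {d : ℕ} {l : List ℕ} (hl : l ∈ evenBasal d) :
    ∃ a t, l = a :: t ∧ Even a :=
  match l, hl with
  | a :: t, hl => ⟨a, t, rfl, (cons_mem_evenBasal.1 hl).2.2⟩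

lemma evenBasal_zero : evenBasal 0 = ∅ :=
  Set.eq_empty_of_forall_notMem fun _ hl => hl.1.1.1 (List.eq_nil_of_length_eq_zero hl.2.1)

lemma evenBasal_one : evenBasal 1 = {[2]} := by
  ext l
  match l with
  | [] => simp [evenBasal]
  | [a] => simp [cons_mem_evenBasal, isBasal_singleton]; rintro rfl; decide
  | _ :: _ :: _ => simp [evenBasal]

def stepTwo (t : List ℕ) : List ℕ := (t.headI + 2) :: t

def stepOneOne (t : List ℕ) : List ℕ := (t.headI + 2) :: (t.headI + 1) :: t

lemma stepTwo_injective : stepTwo.Injective :=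
  Function.LeftInverse.injective (g := List.tail) fun _ => rfl

lemma stepOneOne_injective : stepOneOne.Injective :=
  Function.LeftInverse.injective (g := List.drop 2) fun _ => rfl

lemma stepTwo_mem_evenBasal {d : ℕ} {t : List ℕ} (ht : t ∈ evenBasal d) :
    stepTwo t ∈ evenBasal (d + 1) := by
  obtain ⟨b, u, rfl, hb⟩ := exists_cons_of_mem_evenBasal ht
  obtain ⟨hbu, hlen, -⟩ := cons_mem_evenBasal.1 ht
  rw [stepTwo, List.headI_cons, cons_mem_evenBasal, isBasal_cons_cons]
  refine ⟨⟨hbu, by omega, by omega, fun h => Nat.not_odd_iff_even.2 hb h.2⟩, by simpa using hlen,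
    hb.add (by decide)⟩

lemma stepOneOne_mem_evenBasal {d : ℕ} {t : List ℕ} (ht : t ∈ evenBasal d) :
    stepOneOne t ∈ evenBasal (d + 2) := by
  obtain ⟨b, u, rfl, hb⟩ := exists_cons_of_mem_evenBasal ht
  obtain ⟨hbu, hlen, -⟩ := cons_mem_evenBasal.1 ht
  rw [stepOneOne, List.headI_cons, cons_mem_evenBasal, isBasal_cons_cons, isBasal_cons_cons]
  refine ⟨⟨⟨hbu, by omega, by omega, fun h => Nat.not_odd_iff_even.2 hb h.2⟩, by omega, by omega,
    fun h => Nat.not_odd_iff_even.2 (hb.add (by decide)) h.1⟩, by simpa using hlen,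
    hb.add (by decide)⟩

lemma eq_stepTwo_or_eq_stepOneOne {d : ℕ} {l : List ℕ} (hl : l ∈ evenBasal (d + 2)) :
    (∃ t ∈ evenBasal (d + 1), stepTwo t = l) ∨ ∃ t ∈ evenBasal d, stepOneOne t = l := by
  obtain ⟨a, l', rfl, ha⟩ := exists_cons_of_mem_evenBasal hl
  obtain ⟨hal', hlen, -⟩ := cons_mem_evenBasal.1 hl
  obtain ⟨b, t, rfl⟩ :=
    List.exists_cons_of_ne_nil (List.ne_nil_of_length_pos (by omega : 0 < l'.length))
  obtain ⟨hbt, hba, hab, -⟩ := isBasal_cons_cons.1 hal'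
  have ha2 := Nat.even_iff.1 ha
  rcases Nat.even_or_odd b with hb | hb
  · have hb2 := Nat.even_iff.1 hb
    have hab' : a = b + 2 := by omega
    exact .inl ⟨b :: t, cons_mem_evenBasal.2 ⟨hbt, by simpa using hlen, hb⟩,
      by rw [stepTwo, List.headI_cons, hab']⟩
  · have hb2 := Nat.odd_iff.1 hb
    obtain - | ⟨c, u⟩ := t
    · have := isBasal_singleton.1 hbt
      omega
    obtain ⟨hcu, hcb, hbc, hbc_odd⟩ := isBasal_cons_cons.1 hbt
    have hc : Even c := Nat.not_odd_iff_even.1 fun hc => hbc_odd ⟨hb, hc⟩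
    have hc2 := Nat.even_iff.1 hc
    have hbc' : b = c + 1 := by omega
    have hac : a = c + 2 := by omega
    exact .inr ⟨c :: u, cons_mem_evenBasal.2 ⟨hcu, by simpa using hlen, hc⟩,
      by rw [stepOneOne, List.headI_cons, hac, hbc']⟩

lemma evenBasal_add_two (d : ℕ) :
    evenBasal (d + 2) = stepTwo '' evenBasal (d + 1) ∪ stepOneOne '' evenBasal d := by
  ext l
  refine ⟨eq_stepTwo_or_eq_stepOneOne, ?_⟩
  rintro (⟨t, ht, rfl⟩ | ⟨t, ht, rfl⟩)
  exacts [stepTwo_mem_evenBasal ht, stepOneOne_mem_evenBasal ht]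

lemma disjoint_image_stepTwo_image_stepOneOne (d d' : ℕ) :
    Disjoint (stepTwo '' evenBasal d) (stepOneOne '' evenBasal d') := by
  rw [Set.disjoint_left]
  rintro _ ⟨t, ht, rfl⟩ ⟨t', ht', heq⟩
  obtain ⟨b, u, rfl, hb⟩ := exists_cons_of_mem_evenBasal ht
  obtain ⟨c, v, rfl, hc⟩ := exists_cons_of_mem_evenBasal ht'
  simp only [stepTwo, stepOneOne, List.headI_cons, List.cons.injEq] at heq
  rw [← heq.2.1] at hb
  exact Nat.not_even_iff_odd.2 (hc.add_one) hb

theorem encard_evenBasal : ∀ n, (evenBasal n).encard = Nat.fib n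
  | 0 => by simp [evenBasal_zero]
  | 1 => by simp [evenBasal_one]
  | n + 2 => by
    rw [evenBasal_add_two, Set.encard_union_eq (disjoint_image_stepTwo_image_stepOneOne _ _),
      stepTwo_injective.encard_image, stepOneOne_injective.encard_image, encard_evenBasal (n + 1),
      encard_evenBasal n, Nat.fib_add_two, Nat.cast_add, add_comm]

lemma eq_fib_add_one (f : ℕ → ℕ) (h0 : f 0 = 1) (h1 : f 1 = 1)
    (hrec : ∀ n, f (n + 2) = f (n + 1) + f n) : ∀ n, f n = Nat.fib (n + 1)
  | 0 => h0
  | 1 => h1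
  | n + 2 => by
    rw [hrec, eq_fib_add_one f h0 h1 hrec (n + 1), eq_fib_add_one f h0 h1 hrec n,
      Nat.fib_add_two (n := n + 1), add_comm]

/-- For every `d ≥ 1`, the number of basal billiard partitions with exactly `d`
parts whose largest part is an even number equals `f (d-1)`. -/
theorem number_of_basal_billiard_partitions_even_largest (f : ℕ → ℕ)
    (h0 : f 0 = 1) (h1 : f 1 = 1) (hrec : ∀ n, f (n + 2) = f (n + 1) + f n) :
    ∀ d : ℕ, 1 ≤ d →
      {l : List ℕ | IsBasal l ∧ l.length = d ∧
        ∃ m, l.head? = some m ∧ Even m}.ncard = f (d - 1) := by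
  intro d hd
  change (evenBasal d).ncard = f (d - 1)
  rw [Set.ncard_def, encard_evenBasal, ENat.toNat_natCast, eq_fib_add_one f h0 h1 hrec,
    Nat.sub_add_cancel hd]
end

section
/- Let π = (m_1 > m_2 > ⋯ > m_d) be an Euclidean billiard partition. Then the following are equivalent: (i) for every index i, decreasing the part m_i by 2 (keeping all other parts fixed) does not produce an Euclidean billiard partition with d parts; (ii) m_d = 2 and m_i − m_{i+1} ≤ 2 for all 1 ≤ i < d (i.e., π is a basal billiard partition). -/
theorem isEBP_iff_getElem {l : List ℕ} (hl : 0 < l.length) :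
    IsEBP l ↔ (∀ i (h : i + 1 < l.length), l[i + 1] < l[i]) ∧
      (∀ i (h : i < l.length), 0 < l[i]) ∧ Even l[l.length - 1] ∧
      ∀ i (h : i + 1 < l.length), ¬(Odd l[i] ∧ Odd l[i + 1]) := by
  have hlast : l.getLast? = some l[l.length - 1] := by
    rw [List.getLast?_eq_getElem?, List.getElem?_eq_getElem]
  simp only [IsEBP, List.Chain', List.isChain_iff_getElem, List.forall_mem_iff_getElem, hlast,
    Option.mem_def, Option.some.injEq, forall_eq', List.ne_nil_of_length_pos hl, ne_eq,
    not_false_eq_true, true_and]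

theorem isEBP_set_iff {l : List ℕ} (hl : IsEBP l) {i : ℕ} (hi : i < l.length) {v : ℕ}
    (hv : v ≤ l[i]) (hmod : v % 2 = l[i] % 2) :
    IsEBP (l.set i v) ↔ 0 < v ∧ ∀ h : i + 1 < l.length, l[i + 1] < v := by
  have hn : 0 < l.length := by omega
  obtain ⟨hdec, hpos, heven, hpar⟩ := (isEBP_iff_getElem hn).1 hl
  have hodd : ∀ k (hk : k < l.length), Odd ((l.set i v)[k]'(by simpa)) ↔ Odd l[k] := by
    intro k hk
    rw [List.getElem_set]
    split_ifs with hik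
    · subst hik
      rw [Nat.odd_iff, Nat.odd_iff, hmod]
    · rfl
  rw [isEBP_iff_getElem (by simpa using hn)]
  simp only [List.length_set]
  constructor
  · rintro ⟨hdec', hpos', -, -⟩
    exact ⟨by simpa using hpos' i hi, fun h => by simpa using hdec' i h⟩
  · rintro ⟨hv0, hnext⟩
    refine ⟨fun k hk => ?_, fun k hk => ?_, ?_, fun k hk => ?_⟩
    · simp only [List.getElem_set]
      split_ifs with h1 h2 h2
      · omega
      · subst h1; exact hv.trans_lt (hdec k hk)
      · subst h2; exact hnext hk
      · exact hdec k hk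
    · simp only [List.getElem_set]
      split_ifs
      · exact hv0
      · exact hpos k hk
    · rw [← Nat.not_odd_iff_even, hodd, Nat.not_odd_iff_even]
      exact heven
    · rw [hodd, hodd]
      exact hpar k hk

theorem isEBP_set_sub_two_iff {l : List ℕ} (hl : IsEBP l) {i : ℕ} (hi : i < l.length) :
    IsEBP (l.set i (l[i] - 2)) ↔ 2 < l[i] ∧ ∀ h : i + 1 < l.length, l[i + 1] + 2 < l[i] := by
  by_cases h2 : 2 ≤ l[i]
  · rw [isEBP_set_iff hl hi (Nat.sub_le _ _) (by omega)]
    exact and_congr (by omega) (forall_congr' fun _ => by omega)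
  · refine iff_of_false (fun h => ?_) (by omega)
    have := h.2.2.1 _ (List.mem_set hi _)
    omega

theorem isEBP_set_sub_two_iff_of_succ_lt {l : List ℕ} (hl : IsEBP l) {i : ℕ}
    (hi : i + 1 < l.length) : IsEBP (l.set i (l[i] - 2)) ↔ 2 < l[i] - l[i + 1] := by
  have hpos := (isEBP_iff_getElem (by omega)).1 hl |>.2.1 (i + 1) hi
  rw [isEBP_set_sub_two_iff hl (by omega)]
  exact ⟨fun ⟨_, hgap⟩ => by have := hgap hi; omega,
    fun hgap => ⟨by omega, fun _ => by omega⟩⟩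

theorem isEBP_set_last_sub_two_iff {l : List ℕ} (hl : IsEBP l) (hn : 0 < l.length) :
    IsEBP (l.set (l.length - 1) (l[l.length - 1] - 2)) ↔ l[l.length - 1] ≠ 2 := by
  obtain ⟨-, hpos, ⟨k, hk⟩, -⟩ := (isEBP_iff_getElem hn).1 hl
  have := hpos (l.length - 1) (by omega)
  rw [isEBP_set_sub_two_iff hl (by omega)]
  exact ⟨fun ⟨h2, _⟩ => by omega, fun h2 => ⟨by omega, fun h => absurd h (by omega)⟩⟩

/-- For an Euclidean billiard partition `π = (m₁ > ⋯ > m_d)`, the following are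
equivalent: (i) for every index `i`, decreasing the part `m_i` by `2` (keeping
all other parts fixed) does not produce an Euclidean billiard partition with
`d` parts; (ii) `m_d = 2` and `m_i − m_{i+1} ≤ 2` for all `1 ≤ i < d`, i.e. `π`
is a basal billiard partition. -/
theorem basal_iff_no_part_reducible (l : List ℕ) (h : IsEBP l) :
    (∀ i : Fin l.length, ¬ IsEBP (l.set i (l.get i - 2))) ↔
      (l.getLast? = some 2 ∧ l.Chain' (fun a b => a - b ≤ 2)) := by
  have hn : 0 < l.length := List.length_pos_iff.mpr h.1
  rw [List.getLast?_eq_getElem?, List.getElem?_eq_getElem (by omega), Option.some_inj,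
    List.Chain', List.isChain_iff_getElem]
  simp only [List.get_eq_getElem]
  constructor
  · intro H
    refine ⟨?_, fun i hi => ?_⟩
    · by_contra hne
      exact H ⟨l.length - 1, by omega⟩ ((isEBP_set_last_sub_two_iff h hn).2 hne)
    · by_contra hgap
      exact H ⟨i, by omega⟩ ((isEBP_set_sub_two_iff_of_succ_lt h hi).2 (by omega))
  · rintro ⟨hlast, hgap⟩ ⟨i, hi⟩
    obtain hi' | rfl : i + 1 < l.length ∨ i = l.length - 1 := by omega
    · rw [isEBP_set_sub_two_iff_of_succ_lt h hi', not_lt]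
      exact hgap i hi'
    · rw [isEBP_set_last_sub_two_iff h hn]
      exact not_not.2 hlast
end

section
/- Let k ≥ 1, let c_1, …, c_k be positive integers with c_r ≡ r (mod k), and let d_1, …, d_k be nonnegative integers. Suppose (b_1 < b_2 < ⋯ < b_j) is a type-B basis element, i.e.: b_1 = c_r where r ∈ {1,…,k} is the residue of b_1 modulo k; for every i, b_i ≥ c_{r_i} where r_i is the residue of b_i; and for every i ≥ 2, max{d_{r_i}, 1} ≤ b_i − b_{i−1} < d_{r_i} + k. Let 0 ≤ p_1 ≤ p_2 ≤ ⋯ ≤ p_j be integers each divisible by k. Then the sequence (b_1 + p_1, …, b_j + p_j) is strictly increasing, each part b_i + p_i is ≥ c_{r_i} where r_i is its residue modulo k, and for every i ≥ 2 the difference (b_i + p_i) − (b_{i−1} + p_{i−1}) is ≥ max{1, d_{r_i}} where r_i is the residue of b_i + p_i modulo k; i.e., the resulting partition belongs to the type-B partition class determined by (c_r) and (d_r). -/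
/-- The residue of `n` modulo `k`, taken in `{1, 2, …, k}` (with `k`
representing the residue `0`). -/
def res (k n : ℕ) : ℕ := if n % k = 0 then k else n % k

/-- A type-B basis element for the data `(c_r)`, `(d_r)`: a strictly increasing
sequence `b 0 < b 1 < ⋯ < b (j-1)` of positive integers such that `b 0 = c r`
where `r` is the residue of `b 0` modulo `k`; every `b i` is at least `c` of its
residue; and each difference `b (i+1) - b i` lies in `[max (d r) 1, d r + k)`,
where `r` is the residue of `b (i+1)`. -/
def TypeBBasis (k j : ℕ) (c d b : ℕ → ℕ) : Prop :=
  (∀ i, i + 1 < j → b i < b (i + 1)) ∧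
  (∀ i, i < j → 0 < b i) ∧
  (0 < j → b 0 = c (res k (b 0))) ∧
  (∀ i, i < j → c (res k (b i)) ≤ b i) ∧
  (∀ i, i + 1 < j →
    max (d (res k (b (i + 1)))) 1 ≤ b (i + 1) - b i ∧
      b (i + 1) - b i < d (res k (b (i + 1))) + k)

theorem res_add_of_dvd {k m : ℕ} (n : ℕ) (h : k ∣ m) : res k (n + m) = res k n := by
  obtain ⟨q, rfl⟩ := h
  simp only [res, Nat.add_mul_mod_self_left]

theorem Nat.sub_le_add_sub_add {a a' p p' : ℕ} (hp : p ≤ p') : a' - a ≤ (a' + p') - (a + p) :=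
  calc a' - a = (a' + p) - (a + p) := (Nat.add_sub_add_right a' p a).symm
    _ ≤ (a' + p') - (a + p) := Nat.sub_le_sub_right (Nat.add_le_add_left hp a') _

theorem typeB_basis_add_multiples_mem_class_general (k j : ℕ)
    (c d : ℕ → ℕ)
    (b p : ℕ → ℕ)
    (hb : TypeBBasis k j c d b)
    (hpdvd : ∀ i, i < j → k ∣ p i)
    (hpmono : ∀ i, i + 1 < j → p i ≤ p (i + 1)) :
    (∀ i, i < j → 0 < b i + p i) ∧
    (∀ i, i + 1 < j → b i + p i < b (i + 1) + p (i + 1)) ∧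
    (∀ i, i < j → c (res k (b i + p i)) ≤ b i + p i) ∧
    (∀ i, i + 1 < j →
      max 1 (d (res k (b (i + 1) + p (i + 1)))) ≤
        (b (i + 1) + p (i + 1)) - (b i + p i)) := by
  obtain ⟨hlt, hpos, -, hge, hgap⟩ := hb
  have hres : ∀ i, i < j → res k (b i + p i) = res k (b i) := fun i hi ↦
    res_add_of_dvd (b i) (hpdvd i hi)
  refine ⟨fun i hi ↦ (hpos i hi).trans_le le_self_add,
    fun i hi ↦ Nat.add_lt_add_of_lt_of_le (hlt i hi) (hpmono i hi),
    fun i hi ↦ ?_, fun i hi ↦ ?_⟩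
  · rw [hres i hi]
    exact (hge i hi).trans le_self_add
  · rw [hres (i + 1) hi, max_comm]
    exact (hgap i hi).1.trans (Nat.sub_le_add_sub_add (hpmono i hi))

/-- Adding a weakly increasing sequence of nonnegative multiples of `k` to a
type-B basis element yields a member of the type-B partition class: the result
is strictly increasing, each part is at least `c` of its residue, and adjacent
differences are at least `max 1 (d r)` where `r` is the residue of the larger
part. -/
theorem typeB_basis_add_multiples_mem_class (k j : ℕ) (hk : 1 ≤ k)
    (c d : ℕ → ℕ)
    (hc : ∀ r, 1 ≤ r → r ≤ k → 0 < c r ∧ c r % k = r % k)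
    (b p : ℕ → ℕ)
    (hb : TypeBBasis k j c d b)
    (hpdvd : ∀ i, i < j → k ∣ p i)
    (hpmono : ∀ i, i + 1 < j → p i ≤ p (i + 1)) :
    (∀ i, i < j → 0 < b i + p i) ∧
    (∀ i, i + 1 < j → b i + p i < b (i + 1) + p (i + 1)) ∧
    (∀ i, i < j → c (res k (b i + p i)) ≤ b i + p i) ∧
    (∀ i, i + 1 < j →
      max 1 (d (res k (b (i + 1) + p (i + 1)))) ≤
        (b (i + 1) + p (i + 1)) - (b i + p i)) :=
  typeB_basis_add_multiples_mem_class_general k j c d b p hb hpdvd hpmono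
end

section
/- Let k ≥ 1, let c_1, …, c_k be positive integers with c_r ≡ r (mod k), and let d_1, …, d_k be nonnegative integers. Suppose (b_1 < ⋯ < b_j) and (b'_1 < ⋯ < b'_j) are type-B basis elements, and 0 ≤ p_1 ≤ ⋯ ≤ p_j and 0 ≤ p'_1 ≤ ⋯ ≤ p'_j are integers divisible by k, such that b_i + p_i = b'_i + p'_i for all 1 ≤ i ≤ j. Then b_i = b'_i and p_i = p'_i for all i. In other words, the representation of a partition as a type-B basis element plus a weakly increasing sequence of nonnegative multiples of k is unique. -/
theorem Nat.ModEq.eq_of_le_of_lt_add {a b m n : ℕ} (h : a ≡ b [MOD m])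
    (ha : n ≤ a) (ha' : a < n + m) (hb : n ≤ b) (hb' : b < n + m) : a = b :=
  h.eq_of_abs_lt <| abs_sub_lt_iff.mpr ⟨by omega, by omega⟩

theorem res_congr {k a b : ℕ} (h : a ≡ b [MOD k]) : res k a = res k b := by
  rw [res, res, show a % k = b % k from h]

namespace TypeBBasis

variable {k j : ℕ} {c d b b' : ℕ → ℕ}

theorem head_eq_of_modEq (hb : TypeBBasis k j c d b) (hb' : TypeBBasis k j c d b')
    (hj : 0 < j) (h : b 0 ≡ b' 0 [MOD k]) : b 0 = b' 0 := by
  rw [hb.2.2.1 hj, hb'.2.2.1 hj, res_congr h]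

theorem succ_eq_of_modEq (hb : TypeBBasis k j c d b) (hb' : TypeBBasis k j c d b')
    {i : ℕ} (hi : i + 1 < j) (heq : b i = b' i) (h : b (i + 1) ≡ b' (i + 1) [MOD k]) :
    b (i + 1) = b' (i + 1) := by
  obtain ⟨hlo, hhi⟩ := hb.2.2.2.2 i hi
  obtain ⟨hlo', hhi'⟩ := hb'.2.2.2.2 i hi
  rw [← res_congr h] at hlo' hhi'
  have hlt := hb.1 i hi
  have hlt' := hb'.1 i hi
  have hgap_modEq : b (i + 1) - b i ≡ b' (i + 1) - b' i [MOD k] := by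
    refine Nat.ModEq.add_left_cancel' (b i) ?_
    rwa [Nat.add_sub_cancel' hlt.le, heq, Nat.add_sub_cancel' hlt'.le]
  have := hgap_modEq.eq_of_le_of_lt_add (n := d (res k (b (i + 1))))
    (by omega) hhi (by omega) hhi'
  omega

theorem eq_of_modEq (hb : TypeBBasis k j c d b) (hb' : TypeBBasis k j c d b')
    (h : ∀ i, i < j → b i ≡ b' i [MOD k]) : ∀ i, i < j → b i = b' i := by
  intro i hi
  induction i with
  | zero => exact hb.head_eq_of_modEq hb' hi (h 0 hi)
  | succ i ih => exact hb.succ_eq_of_modEq hb' hi (ih (by omega)) (h _ hi)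

end TypeBBasis

theorem typeB_decomposition_unique_general (k j : ℕ)
    (c d : ℕ → ℕ)
    (b b' p p' : ℕ → ℕ)
    (hb : TypeBBasis k j c d b) (hb' : TypeBBasis k j c d b')
    (hp : ∀ i, i < j → k ∣ p i) (hp' : ∀ i, i < j → k ∣ p' i)
    (heq : ∀ i, i < j → b i + p i = b' i + p' i) :
    ∀ i, i < j → b i = b' i ∧ p i = p' i := by
  have hmod : ∀ i, i < j → b i ≡ b' i [MOD k] := fun i hi =>
    calc b i ≡ b i + p i [MOD k] := by
          simpa using ((Nat.modEq_zero_iff_dvd.mpr (hp i hi)).symm.add_left (b i))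
      _ = b' i + p' i := heq i hi
      _ ≡ b' i [MOD k] := by
          simpa using (Nat.modEq_zero_iff_dvd.mpr (hp' i hi)).add_left (b' i)
  intro i hi
  have hbi := hb.eq_of_modEq hb' hmod i hi
  exact ⟨hbi, by have := heq i hi; omega⟩

/-- Uniqueness of the representation of a partition as a type-B basis element
plus a weakly increasing sequence of nonnegative multiples of `k`. -/
theorem typeB_decomposition_unique (k j : ℕ) (hk : 1 ≤ k)
    (c d : ℕ → ℕ)
    (hc : ∀ r, 1 ≤ r → r ≤ k → 0 < c r ∧ c r % k = r % k)
    (b b' p p' : ℕ → ℕ)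
    (hb : TypeBBasis k j c d b) (hb' : TypeBBasis k j c d b')
    (hp : ∀ i, i < j → k ∣ p i) (hp' : ∀ i, i < j → k ∣ p' i)
    (hpm : ∀ i, i + 1 < j → p i ≤ p (i + 1))
    (hpm' : ∀ i, i + 1 < j → p' i ≤ p' (i + 1))
    (heq : ∀ i, i < j → b i + p i = b' i + p' i) :
    ∀ i, i < j → b i = b' i ∧ p i = p' i :=
  typeB_decomposition_unique_general k j c d b b' p p' hb hb' hp hp' heq
end

section
/- Fix an integer k ≥ 1 and a subset O ⊆ {1, …, k} with |O| = ℓ (the odd-like residues). For d ≥ 1 let f_d be the number of strictly increasing sequences b_1 < b_2 < ⋯ < b_d of positive integers such that b_1 ≤ k, and for every 2 ≤ i ≤ d, letting r ∈ {1,…,k} be the residue of b_i modulo k: b_i − b_{i−1} ∈ {1, …, k−1} if r ∈ O, and b_i − b_{i−1} ∈ {1, …, k} if r ∉ O. Then f_1 = k, f_2 = k² − ℓ, and for all d ≥ 1 the Lucas-type recurrence f_{d+2} = (k−1)·f_{d+1} + (k−ℓ)·f_d holds. -/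
/-!
Let `F n` count the admissible sequences of length `n + 1` and `G n` those among them whose last
term has residue in `O`. The admissible successors of `a` are the `k` integers of `(a, a + k]`,
except `a + k` itself when `res k a ∈ O`, and these `k` integers meet every residue exactly once.
Hence `F (n + 1) + G n = k * F n` and `G (n + 1) + G n = ℓ * F n`; eliminating `G` gives the
recurrence.
-/

open Finset

namespace TypeBBasis

variable {k : ℕ} {O : Finset ℕ}

lemma res_mem_Icc (hk : 1 ≤ k) (n : ℕ) : res k n ∈ Icc 1 k := by
  have := Nat.mod_lt n hk
  unfold res
  split <;> simp <;> omega

lemma res_add_self (n : ℕ) : res k (n + k) = res k n := by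
  simp [res]

lemma mod_eq_of_res_eq (hk : 1 ≤ k) {m n : ℕ} (h : res k m = res k n) : m % k = n % k := by
  have := Nat.mod_lt m hk
  have := Nat.mod_lt n hk
  unfold res at h
  split_ifs at h <;> omega

lemma res_injOn_Ioc (hk : 1 ≤ k) (a : ℕ) : Set.InjOn (res k) (Ioc a (a + k)) := by
  intro m hm n hn h
  simp only [coe_Ioc, Set.mem_Ioc] at hm hn
  have key : ∀ {m n : ℕ}, m ≤ n → n < m + k → m % k = n % k → m = n := fun hle hlt hmn => by
    have := Nat.eq_zero_of_dvd_of_lt ((Nat.modEq_iff_dvd' hle).mp hmn) (by omega)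
    omega
  rcases le_total m n with hle | hle
  · exact key hle (by omega) (mod_eq_of_res_eq hk h)
  · exact (key hle (by omega) (mod_eq_of_res_eq hk h.symm)).symm

lemma image_res_Ioc (hk : 1 ≤ k) (a : ℕ) : (Ioc a (a + k)).image (res k) = Icc 1 k := by
  refine eq_of_subset_of_card_le (image_subset_iff.mpr fun n _ => res_mem_Icc hk n) ?_
  rw [card_image_of_injOn (res_injOn_Ioc hk a)]
  simp

lemma card_filter_res_mem_Ioc (hk : 1 ≤ k) (hO : O ⊆ Icc 1 k) (a : ℕ) :
    #{b ∈ Ioc a (a + k) | res k b ∈ O} = #O := by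
  rw [← card_image_of_injOn ((res_injOn_Ioc hk a).mono (filter_subset _ _)),
    ← filter_image (p := (· ∈ O)), image_res_Ioc hk a, filter_mem_eq_inter, inter_eq_right.mpr hO]

def succs (k : ℕ) (O : Finset ℕ) (a : ℕ) : Finset ℕ :=
  {b ∈ Ioc a (a + k) | res k b ∈ O → b < a + k}

lemma mem_succs {a b : ℕ} :
    b ∈ succs k O a ↔
      if res k b ∈ O then 1 ≤ b - a ∧ b - a ≤ k - 1 else 1 ≤ b - a ∧ b - a ≤ k := by
  simp only [succs, mem_filter, mem_Ioc]
  split_ifs <;> simp only [true_implies, false_implies, and_true, *] <;> omega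

lemma succs_eq (a : ℕ) :
    succs k O a = if res k a ∈ O then (Ioc a (a + k)).erase (a + k) else Ioc a (a + k) := by
  ext b
  by_cases hb : b = a + k
  · subst hb
    split_ifs with h <;> simp [succs, res_add_self, h]
  · split_ifs <;> simp only [succs, mem_filter, mem_erase, mem_Ioc] <;> omega

lemma card_filter_succs_add (hk : 1 ≤ k) (P : ℕ → Prop) [DecidablePred P] {a : ℕ}
    (hP : res k a ∈ O → P (a + k)) :
    #{b ∈ succs k O a | P b} + (if res k a ∈ O then 1 else 0) = #{b ∈ Ioc a (a + k) | P b} := by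
  rw [succs_eq]
  split_ifs with h
  · rw [filter_erase, card_erase_add_one]
    exact mem_filter.mpr ⟨right_mem_Ioc.mpr (by omega), hP h⟩
  · rfl

def IsAdmissible (k : ℕ) (O : Finset ℕ) (l : List ℕ) : Prop :=
  (∀ x ∈ l, 0 < x) ∧ (∀ x ∈ l.head?, x ≤ k) ∧ l.IsChain (fun a b => b ∈ succs k O a)

lemma isAdmissible_singleton {a : ℕ} : IsAdmissible k O [a] ↔ a ∈ Ioc 0 k := by
  simp [IsAdmissible]

lemma isAdmissible_concat {l : List ℕ} (hl : l ≠ []) {b : ℕ} :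
    IsAdmissible k O (l ++ [b]) ↔ IsAdmissible k O l ∧ b ∈ succs k O (l.getLastD 0) := by
  have hb : b ∈ succs k O (l.getLast hl) → 0 < b := fun h => by
    simp only [succs, mem_filter, mem_Ioc] at h
    omega
  simp only [IsAdmissible, List.isChain_append, List.mem_append, List.mem_singleton, or_imp,
    forall_and, forall_eq, List.head?_append_of_ne_nil _ hl, List.getLast?_eq_some_getLast hl,
    List.getLastD_eq_getLast?, List.isChain_singleton, List.head?_singleton, Option.mem_some_iff,
    Option.getD_some, forall_eq', true_and]
  tauto

def seqs (k : ℕ) (O : Finset ℕ) : ℕ → Finset (List ℕ)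
  | 0 => (Ioc 0 k).image ([·])
  | n + 1 => (seqs k O n).biUnion fun l => (succs k O (l.getLastD 0)).image (l ++ [·])

lemma mem_seqs {n : ℕ} {l : List ℕ} :
    l ∈ seqs k O n ↔ l.length = n + 1 ∧ IsAdmissible k O l := by
  induction n generalizing l with
  | zero =>
    simp only [seqs, mem_image, zero_add, List.length_eq_one_iff]
    constructor
    · rintro ⟨a, ha, rfl⟩
      exact ⟨⟨a, rfl⟩, isAdmissible_singleton.mpr ha⟩
    · rintro ⟨⟨a, rfl⟩, h⟩
      exact ⟨a, isAdmissible_singleton.mp h, rfl⟩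
  | succ n ih =>
    rcases List.eq_nil_or_concat l with rfl | ⟨L, b, rfl⟩
    · simp [seqs]
    have hL : L.length = n + 1 → L ≠ [] := by rintro h rfl; simp at h
    simp only [seqs, mem_biUnion, mem_image, ih, List.concat_eq_append, List.append_singleton_inj,
      List.length_append, List.length_singleton, Nat.add_right_cancel_iff]
    constructor
    · rintro ⟨_, ⟨hlen, hadm⟩, _, hb, rfl, rfl⟩
      exact ⟨hlen, (isAdmissible_concat (hL hlen)).mpr ⟨hadm, hb⟩⟩
    · rintro ⟨hlen, hadm⟩
      obtain ⟨hadm, hb⟩ := (isAdmissible_concat (hL hlen)).mp hadm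
      exact ⟨L, ⟨hlen, hadm⟩, b, hb, rfl, rfl⟩

lemma card_filter_seqs_zero (P : ℕ → Prop) [DecidablePred P] :
    #{l ∈ seqs k O 0 | P (l.getLastD 0)} = #{b ∈ Ioc 0 k | P b} := by
  rw [seqs, filter_image, card_image_of_injective _ List.singleton_injective]
  rfl

lemma card_filter_seqs_succ (P : ℕ → Prop) [DecidablePred P] (n : ℕ) :
    #{l ∈ seqs k O (n + 1) | P (l.getLastD 0)} =
      ∑ l ∈ seqs k O n, #{b ∈ succs k O (l.getLastD 0) | P b} := by
  rw [seqs, filter_biUnion, card_biUnion]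
  · refine sum_congr rfl fun l _ => ?_
    rw [filter_image, card_image_of_injective _ fun _ _ h => (List.append_singleton_inj.mp h).2]
    simp only [List.getLastD_concat]
  · intro l _ l' _ hne
    simp only [disjoint_left, mem_filter, mem_image]
    rintro _ ⟨⟨b, _, rfl⟩, _⟩ ⟨⟨b', _, h⟩, _⟩
    exact hne (List.append_singleton_inj.mp h).1.symm

lemma card_filter_seqs_succ_add (hk : 1 ≤ k) (P : ℕ → Prop) [DecidablePred P]
    (hP : ∀ a, res k a ∈ O → P (a + k)) {c : ℕ} (hc : ∀ a, #{b ∈ Ioc a (a + k) | P b} = c)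
    (n : ℕ) :
    #{l ∈ seqs k O (n + 1) | P (l.getLastD 0)} + #{l ∈ seqs k O n | res k (l.getLastD 0) ∈ O} =
      c * #(seqs k O n) := by
  rw [card_filter_seqs_succ, card_filter, ← sum_add_distrib]
  simp only [card_filter_succs_add hk P (hP _), hc, sum_const, smul_eq_mul, mul_comm]

lemma card_seqs_succ_add (hk : 1 ≤ k) (n : ℕ) :
    #(seqs k O (n + 1)) + #{l ∈ seqs k O n | res k (l.getLastD 0) ∈ O} = k * #(seqs k O n) := by
  simpa using card_filter_seqs_succ_add hk (fun _ => True) (fun _ _ => trivial) (by simp) n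

lemma card_filter_seqs_succ_add_res (hk : 1 ≤ k) (hO : O ⊆ Icc 1 k) (n : ℕ) :
    #{l ∈ seqs k O (n + 1) | res k (l.getLastD 0) ∈ O} +
      #{l ∈ seqs k O n | res k (l.getLastD 0) ∈ O} = #O * #(seqs k O n) :=
  card_filter_seqs_succ_add hk _ (fun a h => by rwa [res_add_self])
    (card_filter_res_mem_Ioc hk hO) n

lemma card_seqs_zero : #(seqs k O 0) = k := by
  simpa using card_filter_seqs_zero (k := k) (O := O) (fun _ => True)

lemma card_filter_seqs_zero_res (hk : 1 ≤ k) (hO : O ⊆ Icc 1 k) :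
    #{l ∈ seqs k O 0 | res k (l.getLastD 0) ∈ O} = #O := by
  rw [card_filter_seqs_zero (res k · ∈ O)]
  simpa using card_filter_res_mem_Ioc hk hO 0

lemma card_seqs_add_two (hk : 1 ≤ k) (hO : O ⊆ Icc 1 k) (n : ℕ) :
    #(seqs k O (n + 2)) = (k - 1) * #(seqs k O (n + 1)) + (k - #O) * #(seqs k O n) := by
  have hOk : #O ≤ k := by simpa using card_le_card hO
  have h₀ := card_seqs_succ_add (O := O) hk n
  have h₁ := card_seqs_succ_add (O := O) hk (n + 1)
  have hres := card_filter_seqs_succ_add_res hk hO n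
  zify [hk, hOk] at *
  linear_combination h₁ - hres + h₀

lemma ncard_eq_card_seqs (n : ℕ) :
    {l : List ℕ | l.length = n + 1 ∧ (∀ x ∈ l, 0 < x) ∧ (∀ x ∈ l.head?, x ≤ k) ∧
      l.IsChain (fun a b =>
        if res k b ∈ O then 1 ≤ b - a ∧ b - a ≤ k - 1 else 1 ≤ b - a ∧ b - a ≤ k)}.ncard =
      #(seqs k O n) := by
  rw [← Set.ncard_coe_finset]
  congr 1
  ext l
  rw [mem_coe, mem_seqs, IsAdmissible]
  simp only [mem_succs]
  rfl

end TypeBBasis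

open TypeBBasis in
/-- Fix `k ≥ 1` and a set `O ⊆ {1, …, k}` of odd-like residues with `|O| = ℓ`.
If `f d` is the number of strictly increasing sequences `b₁ < ⋯ < b_d` of
positive integers with `b₁ ≤ k` such that each difference `b_i − b_{i−1}` lies
in `{1, …, k−1}` when the residue of `b_i` is in `O` and in `{1, …, k}`
otherwise, then `f 1 = k`, `f 2 = k² − ℓ`, and
`f (d+2) = (k−1)·f (d+1) + (k−ℓ)·f d` for all `d ≥ 1`. -/
theorem typeB_basis_count_lucas_recurrence (k ℓ : ℕ) (hk : 1 ≤ k)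
    (O : Finset ℕ) (hO : O ⊆ Finset.Icc 1 k) (hcard : O.card = ℓ)
    (f : ℕ → ℕ)
    (hf : ∀ d, 1 ≤ d → f d =
      {l : List ℕ | l.length = d ∧ (∀ x ∈ l, 0 < x) ∧ (∀ x ∈ l.head?, x ≤ k) ∧
        l.Chain' (fun a b =>
          if res k b ∈ O then 1 ≤ b - a ∧ b - a ≤ k - 1
          else 1 ≤ b - a ∧ b - a ≤ k)}.ncard) :
    f 1 = k ∧ f 2 = k ^ 2 - ℓ ∧
      ∀ d, 1 ≤ d → f (d + 2) = (k - 1) * f (d + 1) + (k - ℓ) * f d := by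
  have hf_seqs (n : ℕ) : f (n + 1) = #(seqs k O n) :=
    (hf (n + 1) n.succ_pos).trans (ncard_eq_card_seqs n)
  subst hcard
  refine ⟨by rw [hf_seqs 0, card_seqs_zero], ?_, fun d hd => ?_⟩
  · have h := card_seqs_succ_add (O := O) hk 0
    rw [card_seqs_zero, card_filter_seqs_zero_res hk hO] at h
    rw [hf_seqs 1, sq]
    exact Nat.eq_sub_of_add_eq h
  · obtain ⟨n, rfl⟩ := Nat.exists_eq_add_of_le' hd
    rw [hf_seqs, hf_seqs, hf_seqs, card_seqs_add_two hk hO]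
end

section
/- Every basal billiard partition with exactly d parts whose largest part equals 2n has exactly d − n odd parts, and every basal billiard partition with exactly d parts whose largest part equals 2n+1 also has exactly d − n odd parts. -/
theorem List.IsChain.and {α : Type*} {R S : α → α → Prop} :
    ∀ {l : List α}, l.IsChain R → l.IsChain S → l.IsChain (fun a b => R a b ∧ S a b)
  | [], _, _ => .nil
  | [a], _, _ => .singleton a
  | _ :: _ :: _, hR, hS => by
    rw [List.isChain_cons_cons] at hR hS ⊢
    exact ⟨⟨hR.1, hS.1⟩, hR.2.and hS.2⟩

theorem mod_two_add_div_two_eq_of_basal_step {a b : ℕ} (hlt : b < a) (hgap : a - b ≤ 2)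
    (hodd : ¬(Odd a ∧ Odd b)) : a % 2 + a / 2 = b / 2 + 1 := by
  simp only [Nat.odd_iff] at hodd
  omega

theorem countP_odd_cons (a : ℕ) (l : List ℕ) :
    (a :: l).countP (fun x => x % 2 == 1) = l.countP (fun x => x % 2 == 1) + a % 2 := by
  rw [List.countP_cons]
  split <;> simp_all

theorem countP_odd_add_div_two_of_isChain {z : ℕ} :
    ∀ {a : ℕ} {t : List ℕ}, (a :: t).IsChain (fun x y => x % 2 + x / 2 = y / 2 + 1) →
      (a :: t).getLast? = some z →
      (a :: t).countP (fun x => x % 2 == 1) + a / 2 = t.length + (z % 2 + z / 2)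
  | a, [], _, hlast => by
    obtain rfl : a = z := by simpa using hlast
    rw [countP_odd_cons]
    simp
  | a, b :: t, hchain, hlast => by
    obtain ⟨hstep, hchain⟩ := List.isChain_cons_cons.mp hchain
    rw [List.getLast?_cons_cons] at hlast
    have ih := countP_odd_add_div_two_of_isChain hchain hlast
    rw [countP_odd_cons, List.length_cons]
    omega

theorem IsBasal.countP_odd_add_div_two {l : List ℕ} {h : ℕ} (hl : IsBasal l)
    (hhead : l.head? = some h) : l.countP (fun x => x % 2 == 1) + h / 2 = l.length := by
  obtain ⟨⟨-, hdec, -, -, hodd⟩, hlast, hgap⟩ := hl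
  obtain ⟨t, rfl⟩ : ∃ t, l = h :: t := List.head?_eq_some_iff.mp hhead
  have hchain : (h :: t).IsChain (fun x y => x % 2 + x / 2 = y / 2 + 1) :=
    ((hdec.and hgap).and hodd).imp fun _ _ ⟨⟨hlt, hle⟩, hpar⟩ =>
      mod_two_add_div_two_eq_of_basal_step hlt hle hpar
  simpa using countP_odd_add_div_two_of_isChain hchain hlast

/-- A basal billiard partition with `d` parts and largest part `2n` has exactly
`d − n` odd parts, and a basal billiard partition with `d` parts and largest
part `2n+1` also has exactly `d − n` odd parts. -/
theorem basal_number_of_odd_parts :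
    (∀ (l : List ℕ) (n : ℕ), IsBasal l → l.head? = some (2 * n) →
      l.countP (fun x => x % 2 == 1) + n = l.length) ∧
    (∀ (l : List ℕ) (n : ℕ), IsBasal l → l.head? = some (2 * n + 1) →
      l.countP (fun x => x % 2 == 1) + n = l.length) := by
  refine ⟨fun l n hl hhead => ?_, fun l n hl hhead => ?_⟩ <;>
  · have := hl.countP_odd_add_div_two hhead
    omega
end

section
/- Fix an integer d ≥ 1. In the ring ℤ[x][[q]] of formal power series in q with coefficients in ℤ[x], the following identity holds: (∑_{π ∈ D_d} x^{w(π)} q^{|π|}) · ∏_{i=1}^{d}(1 − q^{2i}) = ∑_{π ∈ B_d} x^{w(π)} q^{|π|}, where D_d is the set of all Euclidean billiard partitions with exactly d parts, B_d is the (finite) set of all basal billiard partitions with exactly d parts, |π| is the sum of the parts, and w(π) is the weight exponent of π. -/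
/-- The weight exponent `w(π)` of an Euclidean billiard partition with `d`
parts, `s` of which are odd: `w(π) = d − 1 − 2s` if the largest part is even,
and `w(π) = d − 2s` if the largest part is odd (for Euclidean billiard
partitions these values are nonnegative). -/
def wexp (l : List ℕ) : ℕ :=
  if (l.head?.getD 0) % 2 = 0 then l.length - 1 - 2 * l.countP (fun x => x % 2 == 1)
  else l.length - 2 * l.countP (fun x => x % 2 == 1)

open Classical Polynomial in
/-- The generating series `∑_{π ∈ D_d} x^{w(π)} q^{|π|} ∈ ℤ[x][[q]]` of all
Euclidean billiard partitions with exactly `d` parts: its coefficient at `q^N`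
is the (finite) sum of `x^{w(π)}` over Euclidean billiard partitions `π` with
`d` parts and `|π| = N` (all parts of such a partition are `≤ N`, so it is
encoded exactly once as a function `Fin d → Fin (N+1)`). -/
noncomputable def Dseries (d : ℕ) : PowerSeries (Polynomial ℤ) :=
  PowerSeries.mk fun N =>
    ∑ f : Fin d → Fin (N + 1),
      if IsEBP (List.ofFn fun i => (f i : ℕ)) ∧
          (List.ofFn fun i => (f i : ℕ)).sum = N
      then X ^ wexp (List.ofFn fun i => (f i : ℕ)) else 0

open Classical Polynomial in
/-- The generating series `∑_{π ∈ B_d} x^{w(π)} q^{|π|} ∈ ℤ[x][[q]]` of all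
basal billiard partitions with exactly `d` parts. -/
noncomputable def Bseries (d : ℕ) : PowerSeries (Polynomial ℤ) :=
  PowerSeries.mk fun N =>
    ∑ f : Fin d → Fin (N + 1),
      if IsBasal (List.ofFn fun i => (f i : ℕ)) ∧
          (List.ofFn fun i => (f i : ℕ)).sum = N
      then X ^ wexp (List.ofFn fun i => (f i : ℕ)) else 0

/-! Multiplying by `1 - q^(2(k+1))` removes the partitions whose `(k+1)`-st gap exceeds `2`:
adding `2` to each of the first `k+1` parts preserves all parities (hence the weight), raises the
size by `2(k+1)`, and maps the partitions whose first `k` gaps are at most `2` bijectively onto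
those among them whose `(k+1)`-st gap exceeds `2`. After all `d` factors every gap is at most `2`,
including the gap between the smallest part and `0`; since the smallest part is even and
positive, it is then `2`, and the partition is basal. -/

namespace BilliardPartition

open Finset Polynomial

variable {d : ℕ}

-- Parts are padded by `0` beyond the last one, so that the smallest part has a gap too.
def partAt (g : Fin d → ℕ) (p : ℕ) : ℕ := if h : p < d then g ⟨p, h⟩ else 0

lemma partAt_of_lt (g : Fin d → ℕ) {p : ℕ} (h : p < d) : partAt g p = g ⟨p, h⟩ := dif_pos h

lemma partAt_of_le (g : Fin d → ℕ) {p : ℕ} (h : d ≤ p) : partAt g p = 0 := dif_neg (by omega)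

def IsEBPTuple (g : Fin d → ℕ) : Prop :=
  0 < d ∧ (∀ p < d, partAt g (p + 1) < partAt g p) ∧ partAt g (d - 1) % 2 = 0 ∧
    ∀ p, p + 1 < d → ¬(partAt g p % 2 = 1 ∧ partAt g (p + 1) % 2 = 1)

lemma isChain_ofFn_iff_partAt (g : Fin d → ℕ) (r : ℕ → ℕ → Prop) :
    (List.ofFn g).IsChain r ↔ ∀ p, p + 1 < d → r (partAt g p) (partAt g (p + 1)) := by
  rw [List.isChain_ofFn]
  refine forall_congr' fun p => ⟨fun h hp => ?_, fun h hp => ?_⟩ <;>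
    simpa only [partAt_of_lt g hp, partAt_of_lt g (Nat.lt_of_succ_lt hp)] using h hp

lemma getLast?_ofFn_eq_partAt (g : Fin d → ℕ) (hd : 0 < d) :
    (List.ofFn g).getLast? = some (partAt g (d - 1)) := by
  rw [List.getLast?_eq_getElem?, List.length_ofFn, List.getElem?_ofFn,
    partAt_of_lt g (by omega : d - 1 < d)]
  simp [hd]

set_option linter.deprecated false in
lemma isEBP_ofFn_iff (g : Fin d → ℕ) : IsEBP (List.ofFn g) ↔ IsEBPTuple g := by
  rcases Nat.eq_zero_or_pos d with rfl | hd
  · simp [IsEBP, IsEBPTuple]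
  have hpos : (∀ x ∈ List.ofFn g, 0 < x) ↔ ∀ p < d, 0 < partAt g p := by
    simp only [List.mem_ofFn, forall_exists_index, forall_apply_eq_imp_iff]
    exact ⟨fun h p hp => partAt_of_lt g hp ▸ h _, fun h i => partAt_of_lt g i.2 ▸ h i i.2⟩
  simp only [IsEBP, IsEBPTuple, List.Chain', isChain_ofFn_iff_partAt, hpos,
    getLast?_ofFn_eq_partAt g hd, Option.mem_def, Option.some_inj, forall_eq', Nat.even_iff, Nat.odd_iff, ne_eq,
    List.ofFn_eq_nil_iff, hd, Nat.pos_iff_ne_zero.mp hd, not_false_eq_true, true_and]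
  constructor
  · rintro ⟨hdec, hpos, hlast, hodd⟩
    refine ⟨fun p hp => ?_, hlast, hodd⟩
    rcases Nat.lt_or_ge (p + 1) d with h | h
    · exact hdec p h
    · rw [partAt_of_le g h]; exact hpos p hp
  · rintro ⟨hdec, hlast, hodd⟩
    refine ⟨fun p hp => hdec p (by omega), fun p hp => ?_, hlast, hodd⟩
    exact Nat.lt_of_le_of_lt (Nat.zero_le _) (hdec p hp)

lemma IsEBPTuple.partAt_pred_pos {g : Fin d → ℕ} (hg : IsEBPTuple g) : 0 < partAt g (d - 1) := by
  have := hg.2.1 (d - 1) (by have := hg.1; omega)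
  rwa [Nat.sub_add_cancel hg.1, partAt_of_le g le_rfl] at this

def IsBasalUpTo (k : ℕ) (g : Fin d → ℕ) : Prop :=
  IsEBPTuple g ∧ ∀ p < k, partAt g p ≤ partAt g (p + 1) + 2

set_option linter.deprecated false in
lemma isBasal_ofFn_iff (g : Fin d → ℕ) : IsBasal (List.ofFn g) ↔ IsBasalUpTo d g := by
  rw [IsBasal, isEBP_ofFn_iff, IsBasalUpTo]
  refine and_congr_right fun hg => ?_
  have hpos := hg.partAt_pred_pos
  obtain ⟨hd, -, hlast, -⟩ := hg
  simp only [List.Chain', isChain_ofFn_iff_partAt, getLast?_ofFn_eq_partAt g hd, Option.some_inj]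
  constructor
  · rintro ⟨h2, hgap⟩ p hp
    rcases Nat.lt_or_ge (p + 1) d with h | h
    · have := hgap p h; omega
    · rw [partAt_of_le g h, (by omega : p = d - 1), h2]
  · intro hgap
    have := hgap (d - 1) (by omega)
    rw [Nat.sub_add_cancel hd, partAt_of_le g le_rfl] at this
    exact ⟨by omega, fun p hp => by have := hgap p (by omega); omega⟩

lemma IsEBPTuple.antitone_partAt {g : Fin d → ℕ} (hg : IsEBPTuple g) : Antitone (partAt g) :=
  antitone_nat_of_succ_le fun p => by
    rcases Nat.lt_or_ge p d with h | h
    · exact (hg.2.1 p h).le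
    · rw [partAt_of_le g h, partAt_of_le g (by omega)]

lemma IsEBPTuple.two_le_partAt {g : Fin d → ℕ} (hg : IsEBPTuple g) {p : ℕ} (hp : p < d) :
    2 ≤ partAt g p := by
  have := hg.antitone_partAt (show p ≤ d - 1 by omega)
  have := hg.partAt_pred_pos
  have := hg.2.2.1
  omega

def bump (i : ℕ) (g : Fin d → ℕ) : Fin d → ℕ := fun j => g j + if (j : ℕ) < i then 2 else 0

def unbump (i : ℕ) (g : Fin d → ℕ) : Fin d → ℕ := fun j => g j - if (j : ℕ) < i then 2 else 0

lemma partAt_bump (i : ℕ) (g : Fin d → ℕ) (p : ℕ) :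
    partAt (bump i g) p = partAt g p + if p < i ∧ p < d then 2 else 0 := by
  by_cases hp : p < d
  · simp [partAt_of_lt _ hp, bump, hp]
  · simp [partAt_of_le _ (not_lt.mp hp), hp]

lemma partAt_unbump (i : ℕ) (g : Fin d → ℕ) (p : ℕ) :
    partAt (unbump i g) p = partAt g p - if p < i ∧ p < d then 2 else 0 := by
  by_cases hp : p < d
  · simp [partAt_of_lt _ hp, unbump, hp]
  · simp [partAt_of_le _ (not_lt.mp hp), hp]

lemma bump_injective (i : ℕ) : Function.Injective (bump (d := d) i) := fun _ _ h =>
  funext fun j => Nat.add_right_cancel (congrFun h j)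

lemma bump_unbump {i : ℕ} {g : Fin d → ℕ} (hg : IsEBPTuple g) : bump i (unbump i g) = g := by
  funext j
  have : 2 ≤ g j := partAt_of_lt g j.2 ▸ hg.two_le_partAt j.2
  simp only [bump, unbump]
  split_ifs <;> omega

lemma sum_bump {i : ℕ} (hi : i ≤ d) (g : Fin d → ℕ) : ∑ j, bump i g j = ∑ j, g j + 2 * i := by
  simp only [bump]
  rw [sum_add_distrib, sum_ite, sum_const_zero, add_zero, sum_const, smul_eq_mul,
    Fin.card_filter_val_lt, min_eq_right hi, mul_comm]

lemma wexp_eq_of_map_mod_two_eq {l l' : List ℕ} (h : l.map (· % 2) = l'.map (· % 2)) :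
    wexp l = wexp l' := by
  have hlen : l.length = l'.length := by simpa using congrArg List.length h
  have hodd : l.countP (fun x => x % 2 == 1) = l'.countP (fun x => x % 2 == 1) := by
    simpa [List.countP_map, Function.comp_def] using congrArg (List.countP (· == 1)) h
  have hhead : l.head?.getD 0 % 2 = l'.head?.getD 0 % 2 := by
    cases l <;> cases l' <;> simp_all
  simp only [wexp, hlen, hodd, hhead]

lemma wexp_ofFn_bump (i : ℕ) (g : Fin d → ℕ) :
    wexp (List.ofFn (bump i g)) = wexp (List.ofFn g) := by
  refine wexp_eq_of_map_mod_two_eq ?_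
  simp only [List.map_ofFn]
  congr 1
  funext j
  simp only [Function.comp_apply, bump]
  split_ifs <;> omega

open Classical in
noncomputable def weightedSeries (d : ℕ) (P : (Fin d → ℕ) → Prop) : PowerSeries ℤ[X] :=
  PowerSeries.mk fun N =>
    ∑ g ∈ (Finset.Nat.antidiagonalTuple d N).filter P, X ^ wexp (List.ofFn g)

open Classical in
lemma coeff_weightedSeries (P : (Fin d → ℕ) → Prop) (N : ℕ) :
    PowerSeries.coeff N (weightedSeries d P) =
      ∑ g ∈ (Finset.Nat.antidiagonalTuple d N).filter P, X ^ wexp (List.ofFn g) :=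
  PowerSeries.coeff_mk _ _

open Classical in
lemma sum_fin_eq_sum_antidiagonalTuple (P : List ℕ → Prop) (N : ℕ) :
    ∑ f : Fin d → Fin (N + 1),
      (if P (List.ofFn fun i => (f i : ℕ)) ∧ (List.ofFn fun i => (f i : ℕ)).sum = N
        then (X : ℤ[X]) ^ wexp (List.ofFn fun i => (f i : ℕ)) else 0) =
      ∑ g ∈ (Finset.Nat.antidiagonalTuple d N).filter (fun g => P (List.ofFn g)),
        X ^ wexp (List.ofFn g) := by
  rw [← sum_filter]
  refine sum_nbij (fun f i => (f i : ℕ)) (fun f hf => ?_) (fun f _ f' _ h => ?_)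
    (fun g hg => ?_) (fun _ _ => rfl)
  · simp only [mem_filter, mem_univ, true_and, List.sum_ofFn] at hf
    simpa [Finset.Nat.mem_antidiagonalTuple] using hf.symm
  · exact funext fun i => Fin.ext (congrFun h i)
  · simp only [coe_filter, Finset.Nat.mem_antidiagonalTuple, Set.mem_ofPred_eq] at hg
    refine ⟨fun i => ⟨g i, Nat.lt_succ_of_le (hg.1 ▸ single_le_sum (by simp) (mem_univ i))⟩,
      ?_, rfl⟩
    simpa [List.sum_ofFn] using hg.symm

lemma dseries_eq_weightedSeries (d : ℕ) : Dseries d = weightedSeries d IsEBPTuple := by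
  classical
  ext N : 1
  rw [Dseries, PowerSeries.coeff_mk, sum_fin_eq_sum_antidiagonalTuple, coeff_weightedSeries,
    filter_congr fun g _ => isEBP_ofFn_iff g]

lemma bseries_eq_weightedSeries (d : ℕ) : Bseries d = weightedSeries d (IsBasalUpTo d) := by
  classical
  ext N : 1
  rw [Bseries, PowerSeries.coeff_mk, sum_fin_eq_sum_antidiagonalTuple, coeff_weightedSeries,
    filter_congr fun g _ => isBasal_ofFn_iff g]

lemma weightedSeries_eq_add (P Q : (Fin d → ℕ) → Prop) :
    weightedSeries d P = weightedSeries d (fun g => P g ∧ Q g) +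
      weightedSeries d (fun g => P g ∧ ¬Q g) := by
  classical
  ext N : 1
  rw [map_add, coeff_weightedSeries, ← sum_filter_add_sum_filter_not _ Q, filter_filter,
    filter_filter, coeff_weightedSeries, coeff_weightedSeries]
  congr!

lemma X_pow_mul_weightedSeries {A B : (Fin d → ℕ) → Prop} {φ : (Fin d → ℕ) → Fin d → ℕ}
    {m : ℕ} (hφ : Function.Injective φ) (hsum : ∀ g, ∑ j, φ g j = ∑ j, g j + m)
    (hwexp : ∀ g, wexp (List.ofFn (φ g)) = wexp (List.ofFn g))
    (hmaps : ∀ g, A g → B (φ g)) (hsurj : ∀ g, B g → ∃ g', A g' ∧ φ g' = g) :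
    PowerSeries.X ^ m * weightedSeries d A = weightedSeries d B := by
  classical
  ext N : 1
  rw [PowerSeries.coeff_X_pow_mul', coeff_weightedSeries]
  split_ifs with hmN
  · rw [coeff_weightedSeries]
    refine sum_nbij φ (fun g hg => ?_) hφ.injOn (fun g hg => ?_) (fun g _ => by rw [hwexp])
    · simp only [mem_filter, Finset.Nat.mem_antidiagonalTuple] at hg ⊢
      exact ⟨by rw [hsum]; omega, hmaps g hg.2⟩
    · simp only [coe_filter, Finset.Nat.mem_antidiagonalTuple, Set.mem_ofPred_eq] at hg
      obtain ⟨hgN, hgB⟩ := hg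
      obtain ⟨g', hg', rfl⟩ := hsurj g hgB
      have := hsum g'
      refine ⟨g', ?_, rfl⟩
      simp only [coe_filter, Finset.Nat.mem_antidiagonalTuple, Set.mem_ofPred_eq]
      exact ⟨by omega, hg'⟩
  · rw [coeff_weightedSeries]
    refine (sum_eq_zero fun g hg => ?_).symm
    simp only [mem_filter, Finset.Nat.mem_antidiagonalTuple] at hg
    obtain ⟨hgN, hgB⟩ := hg
    obtain ⟨g', -, rfl⟩ := hsurj g hgB
    have := hsum g'
    omega

lemma IsEBPTuple.bump {g : Fin d → ℕ} (hg : IsEBPTuple g) (i : ℕ) : IsEBPTuple (bump i g) := by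
  obtain ⟨hd, hdec, hlast, hodd⟩ := hg
  refine ⟨hd, fun p hp => ?_, ?_, fun p hp => ?_⟩
  · have := hdec p hp
    rw [partAt_bump, partAt_bump]
    split_ifs <;> omega
  · rw [partAt_bump]
    split_ifs <;> omega
  · have := hodd p hp
    rw [partAt_bump, partAt_bump]
    split_ifs <;> omega

lemma IsEBPTuple.partAt_cases {g : Fin d → ℕ} (hg : IsEBPTuple g) (p : ℕ) :
    p < d ∧ 2 ≤ partAt g p ∨ d ≤ p ∧ partAt g p = 0 := by
  rcases Nat.lt_or_ge p d with hp | hp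
  · exact .inl ⟨hp, hg.two_le_partAt hp⟩
  · exact .inr ⟨hp, partAt_of_le g hp⟩

lemma isBasalUpTo_zero : IsBasalUpTo 0 = IsEBPTuple (d := d) := by
  funext g
  simp [IsBasalUpTo]

def WideGapAt (g : Fin d → ℕ) (k : ℕ) : Prop := partAt g (k + 1) + 2 < partAt g k

lemma isBasalUpTo_succ_iff {k : ℕ} {g : Fin d → ℕ} :
    IsBasalUpTo (k + 1) g ↔ IsBasalUpTo k g ∧ ¬WideGapAt g k := by
  rw [IsBasalUpTo, IsBasalUpTo, WideGapAt, Nat.forall_lt_succ_right, not_lt, and_assoc]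

lemma IsBasalUpTo.bump_succ {k : ℕ} {g : Fin d → ℕ} (hk : k < d) (hg : IsBasalUpTo k g) :
    IsBasalUpTo k (bump (k + 1) g) ∧ WideGapAt (bump (k + 1) g) k := by
  refine ⟨⟨hg.1.bump _, fun p hp => ?_⟩, ?_⟩
  · have := hg.2 p hp
    rw [partAt_bump, partAt_bump]
    split_ifs <;> omega
  · have := hg.1.2.1 k hk
    rw [WideGapAt, partAt_bump, partAt_bump]
    split_ifs <;> omega

lemma IsBasalUpTo.unbump_succ {k : ℕ} {g : Fin d → ℕ} (hg : IsBasalUpTo k g)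
    (hgap : WideGapAt g k) : IsBasalUpTo k (unbump (k + 1) g) := by
  rw [WideGapAt] at hgap
  obtain ⟨⟨hd, hdec, hlast, hodd⟩, htight⟩ := hg
  have hcases := IsEBPTuple.partAt_cases ⟨hd, hdec, hlast, hodd⟩
  have hk := hcases k
  refine ⟨⟨hd, fun p hp => ?_, ?_, fun p hp => ?_⟩, fun p hp => ?_⟩
  · obtain rfl | hpk := eq_or_ne p k
    · rw [partAt_unbump, partAt_unbump]
      split_ifs <;> omega
    have := hdec p hp
    have := hcases (p + 1)
    rw [partAt_unbump, partAt_unbump]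
    split_ifs <;> omega
  · have := hcases (d - 1)
    rw [partAt_unbump]
    split_ifs <;> omega
  · have := hodd p hp
    have := hcases p
    have := hcases (p + 1)
    rw [partAt_unbump, partAt_unbump]
    split_ifs <;> omega
  · have := htight p hp
    have := hcases p
    have := hcases (p + 1)
    rw [partAt_unbump, partAt_unbump]
    split_ifs <;> omega

lemma weightedSeries_isBasalUpTo_mul {k : ℕ} (hk : k < d) :
    weightedSeries d (IsBasalUpTo k) * (1 - PowerSeries.X ^ (2 * (k + 1))) =
      weightedSeries d (IsBasalUpTo (k + 1)) := by
  have hshift : PowerSeries.X ^ (2 * (k + 1)) * weightedSeries d (IsBasalUpTo k) =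
      weightedSeries d fun g => IsBasalUpTo k g ∧ WideGapAt g k :=
    X_pow_mul_weightedSeries (bump_injective _) (fun g => sum_bump hk g) (wexp_ofFn_bump _)
      (fun _ hg => hg.bump_succ hk)
      (fun g ⟨hg, hgap⟩ => ⟨unbump (k + 1) g, hg.unbump_succ hgap, bump_unbump hg.1⟩)
  have hnext : (fun g : Fin d → ℕ => IsBasalUpTo k g ∧ ¬WideGapAt g k) = IsBasalUpTo (k + 1) :=
    funext fun _ => propext isBasalUpTo_succ_iff.symm
  rw [mul_sub, mul_one, mul_comm, hshift, weightedSeries_eq_add (IsBasalUpTo k)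
    (fun g => WideGapAt g k), hnext, add_sub_cancel_left]

lemma dseries_mul_prod {k : ℕ} (hk : k ≤ d) :
    Dseries d * ∏ i ∈ Icc 1 k, (1 - PowerSeries.X ^ (2 * i)) =
      weightedSeries d (IsBasalUpTo k) := by
  induction k with
  | zero => rw [Icc_eq_empty (by omega), prod_empty, mul_one, isBasalUpTo_zero,
      dseries_eq_weightedSeries]
  | succ k ih =>
    rw [prod_Icc_succ_top (by omega), ← mul_assoc, ih (by omega),
      weightedSeries_isBasalUpTo_mul hk]

end BilliardPartition

open BilliardPartition in
theorem weighted_ebp_eq_basal_times_product_general (d : ℕ) :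
    Dseries d *
        ∏ i ∈ Finset.Icc 1 d,
          (1 - (PowerSeries.X : PowerSeries (Polynomial ℤ)) ^ (2 * i)) =
      Bseries d := by
  rw [dseries_mul_prod le_rfl, bseries_eq_weightedSeries]

/-- For every `d ≥ 1`, in `ℤ[x][[q]]`:
`(∑_{π ∈ D_d} x^{w(π)} q^{|π|}) · ∏_{i=1}^{d}(1 − q^{2i}) = ∑_{π ∈ B_d} x^{w(π)} q^{|π|}`. -/
theorem weighted_ebp_eq_basal_times_product (d : ℕ) (hd : 1 ≤ d) :
    Dseries d *
        ∏ i ∈ Finset.Icc 1 d,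
          (1 - (PowerSeries.X : PowerSeries (Polynomial ℤ)) ^ (2 * i)) =
      Bseries d :=
  weighted_ebp_eq_basal_times_product_general d
end

section
/- With t(d,m) ∈ ℤ[q] the generating polynomial of basal P_{3,2}-partitions with smallest part 3, d parts, and largest part m, for all n ≥ 2 and all d ≥ 1 the following identity holds (with the convention t(e,m) = 0 for e ≤ 0): t(d, 3n+2) = q^{3n+3}·t(d−1, 3n−1) + q^{6n+2}·(1 + q + q²)·t(d−2, 3n−1) + q^{9n+3}·t(d−3, 3n−1). -/
/-- A basal `P_{3,2}`-partition with smallest part `3`, recorded as the strictly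
increasing list of its parts: the first part is `3`, and each later part `b`
exceeds the previous part `a` by at most `3` if `3 ∣ b` and by at most `2`
otherwise. -/
def IsBasalP32 (l : List ℕ) : Prop :=
  l.head? = some 3 ∧
    l.Chain' (fun a b => a < b ∧ b - a ≤ if b % 3 = 0 then 3 else 2)

open Classical Polynomial in
/-- `t d m ∈ ℤ[q]` is the generating polynomial `∑_b q^{|b|}` of basal
`P_{3,2}`-partitions with smallest part `3`, exactly `d` parts, and largest
part `m` (all parts of such a partition are `≤ m`, so it is encoded exactly
once as a function `Fin d → Fin (m+1)`); in particular `t 0 m = 0`. -/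
noncomputable def t (d m : ℕ) : Polynomial ℤ :=
  ∑ f : Fin d → Fin (m + 1),
    if IsBasalP32 (List.ofFn fun i => (f i : ℕ)) ∧
        (List.ofFn fun i => (f i : ℕ)).getLast? = some m
    then X ^ (List.ofFn fun i => (f i : ℕ)).sum
    else 0

/-!
Removing the largest part `m` of a basal partition leaves a basal partition whose largest part
`a` satisfies `m - maxGap m ≤ a < m`, so `t d m = q^m · ∑ₐ t (d-1) a`. Unfolding this recursion
at `3n+2, 3n+1, 3n, 3n-1` (only `3n` admits a step of `3`) until just `t (d-2)` at `3n-3, 3n-2`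
and `t (d-3)` at `3n-3, 3n-2, 3n-1` remain expresses both sides in the same terms, where they
agree as polynomials.
-/

open Polynomial Finset

def maxGap (b : ℕ) : ℕ := if b % 3 = 0 then 3 else 2

lemma IsBasalP32.le_of_mem {l : List ℕ} {m x : ℕ} (h : IsBasalP32 l) (hm : l.getLast? = some m)
    (hx : x ∈ l) : x ≤ m := by
  have hsorted : l.Pairwise (· ≤ ·) :=
    (List.isChain_iff_pairwise.1 (h.2.imp fun _ _ hab => hab.1)).imp le_of_lt
  rw [List.getLast?_eq_some_getLast (List.ne_nil_of_mem hx), Option.some_inj] at hm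
  exact hm ▸ hsorted.rel_getLast hx

lemma isBasalP32_append_singleton {l : List ℕ} {a b : ℕ} (ha : l.getLast? = some a) :
    IsBasalP32 (l ++ [b]) ↔ IsBasalP32 l ∧ a < b ∧ b - a ≤ maxGap b := by
  have hne : l ≠ [] := by rintro rfl; simp at ha
  unfold IsBasalP32
  rw [List.head?_append_of_ne_nil _ hne]
  change (_ ∧ List.IsChain _ (l ++ [b])) ↔ (_ ∧ List.IsChain _ l) ∧ _
  simp [List.isChain_append, ha, maxGap, and_assoc]

open Classical in
noncomputable def basalParts (d m : ℕ) : Finset (List ℕ) :=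
  ((univ : Finset (Fin d → Fin (m + 1))).image fun f => List.ofFn fun i => (f i : ℕ)).filter
    fun l => IsBasalP32 l ∧ l.getLast? = some m

lemma mem_basalParts {d m : ℕ} {l : List ℕ} :
    l ∈ basalParts d m ↔ l.length = d ∧ IsBasalP32 l ∧ l.getLast? = some m := by
  simp only [basalParts, mem_filter, mem_image, mem_univ, true_and]
  refine ⟨fun ⟨⟨f, hf⟩, h⟩ => ⟨hf ▸ List.length_ofFn, h⟩, fun ⟨hlen, h⟩ => ⟨?_, h⟩⟩
  subst hlen
  exact ⟨fun i => ⟨l.get i, Nat.lt_succ_of_le (h.1.le_of_mem h.2 (l.get_mem i))⟩,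
    List.ofFn_get l⟩

lemma t_eq_sum_basalParts (d m : ℕ) : t d m = ∑ l ∈ basalParts d m, X ^ l.sum := by
  classical
  rw [t, basalParts, sum_filter, sum_image fun f _ g _ h => funext fun i =>
    Fin.ext (congrFun (List.ofFn_injective h) i)]

lemma basalParts_pairwiseDisjoint (s : Set ℕ) (e : ℕ) : s.PairwiseDisjoint (basalParts e) :=
  fun _ _ _ _ hab => disjoint_left.2 fun _ ha hb =>
    hab (Option.some_injective _ ((mem_basalParts.1 ha).2.2.symm.trans (mem_basalParts.1 hb).2.2))

lemma basalParts_succ {m : ℕ} (hm : 4 ≤ m) (e : ℕ) :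
    basalParts (e + 1) m = ((Ico (m - maxGap m) m).biUnion (basalParts e)).image (· ++ [m]) := by
  ext l
  simp only [mem_image, mem_biUnion, mem_Ico, mem_basalParts]
  constructor
  · rintro ⟨hlen, hl, hlast⟩
    obtain ⟨l', rfl⟩ : ∃ l', l = l' ++ [m] :=
      ⟨l.dropLast, (List.dropLast_append_getLast? _ hlast).symm⟩
    obtain ⟨a, ha⟩ : ∃ a, l'.getLast? = some a := by
      refine Option.ne_none_iff_exists'.1 fun h => ?_
      rw [List.getLast?_eq_none_iff] at h
      subst h
      simp [IsBasalP32] at hl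
      omega
    obtain ⟨hl', hlt, hle⟩ := (isBasalP32_append_singleton ha).1 hl
    exact ⟨l', ⟨a, ⟨by omega, hlt⟩, by simpa using hlen, hl', ha⟩, rfl⟩
  · rintro ⟨l', ⟨a, ⟨hlo, hhi⟩, hlen, hl', ha⟩, rfl⟩
    exact ⟨by simp [hlen], (isBasalP32_append_singleton ha).2 ⟨hl', hhi, by omega⟩, by simp⟩

lemma t_succ {m : ℕ} (hm : 4 ≤ m) (e : ℕ) :
    t (e + 1) m = X ^ m * ∑ a ∈ Ico (m - maxGap m) m, t e a := by
  simp_rw [t_eq_sum_basalParts, basalParts_succ hm, mul_sum,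
    sum_image fun _ _ _ _ h => List.append_left_injective _ h,
    sum_biUnion (basalParts_pairwiseDisjoint _ e), List.sum_append, List.sum_singleton, pow_add,
    mul_comm]

-- At `d = 0` the truncated `d - 1` is harmless: both sides vanish.
lemma t_eq_X_pow_mul_sum {m : ℕ} (hm : 4 ≤ m) (d : ℕ) :
    t d m = X ^ m * ∑ a ∈ Ico (m - maxGap m) m, t (d - 1) a := by
  cases d with
  | zero => simp [t]
  | succ e => exact t_succ hm e

lemma t_add_two {m : ℕ} (hm : 2 ≤ m) (h : (m + 2) % 3 ≠ 0) (d : ℕ) :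
    t d (m + 2) = X ^ (m + 2) * (t (d - 1) m + t (d - 1) (m + 1)) := by
  simp [t_eq_X_pow_mul_sum (by omega : 4 ≤ m + 2), maxGap, h, sum_Ico_succ_top]

lemma t_add_three {m : ℕ} (hm : 1 ≤ m) (h : m % 3 = 0) (d : ℕ) :
    t d (m + 3) = X ^ (m + 3) * (t (d - 1) m + t (d - 1) (m + 1) + t (d - 1) (m + 2)) := by
  simp [t_eq_X_pow_mul_sum (by omega : 4 ≤ m + 3), maxGap, h, sum_Ico_succ_top]

open Polynomial in
/-- For all `n ≥ 2` and `d ≥ 1` (with the convention `t e m = 0` for `e ≤ 0`):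
`t(d, 3n+2) = q^{3n+3}·t(d−1, 3n−1) + q^{6n+2}·(1+q+q²)·t(d−2, 3n−1) + q^{9n+3}·t(d−3, 3n−1)`. -/
theorem t_third_order_recursion :
    ∀ n d : ℕ, 2 ≤ n → 1 ≤ d →
      t d (3 * n + 2) =
        X ^ (3 * n + 3) * t (d - 1) (3 * n - 1) +
          X ^ (6 * n + 2) * (1 + X + X ^ 2) * t (d - 2) (3 * n - 1) +
          X ^ (9 * n + 3) * t (d - 3) (3 * n - 1) := by
  intro n d hn _
  obtain ⟨k, rfl⟩ : ∃ k, n = k + 2 := ⟨n - 2, by omega⟩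
  have h₁ : t d (3 * k + 8) = X ^ (3 * k + 8) * (t (d - 1) (3 * k + 6) + t (d - 1) (3 * k + 7)) :=
    t_add_two (by omega) (by omega) d
  have h₂ : t (d - 1) (3 * k + 7) =
      X ^ (3 * k + 7) * (t (d - 2) (3 * k + 5) + t (d - 2) (3 * k + 6)) :=
    t_add_two (by omega) (by omega) (d - 1)
  have h₃ : t (d - 1) (3 * k + 6) =
      X ^ (3 * k + 6) * (t (d - 2) (3 * k + 3) + t (d - 2) (3 * k + 4) + t (d - 2) (3 * k + 5)) :=
    t_add_three (by omega) (by omega) (d - 1)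
  have h₄ : t (d - 1) (3 * k + 5) =
      X ^ (3 * k + 5) * (t (d - 2) (3 * k + 3) + t (d - 2) (3 * k + 4)) :=
    t_add_two (by omega) (by omega) (d - 1)
  have h₅ : t (d - 2) (3 * k + 6) =
      X ^ (3 * k + 6) * (t (d - 3) (3 * k + 3) + t (d - 3) (3 * k + 4) + t (d - 3) (3 * k + 5)) :=
    t_add_three (by omega) (by omega) (d - 2)
  have h₆ : t (d - 2) (3 * k + 5) =
      X ^ (3 * k + 5) * (t (d - 3) (3 * k + 3) + t (d - 3) (3 * k + 4)) :=
    t_add_two (by omega) (by omega) (d - 2)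
  rw [show 3 * (k + 2) + 2 = 3 * k + 8 by ring, show 3 * (k + 2) - 1 = 3 * k + 5 by omega]
  rw [h₁, h₂, h₃, h₄, h₅, h₆]
  ring
end

section
/- With t(d,m) ∈ ℤ[q] the generating polynomial of basal P_{3,2}-partitions with smallest part 3, d parts, and largest part m, for every n ≥ 1 the following identity holds in the polynomial ring ℤ[q,z]: ∑_{d≥1} t(d, 3n+2)·z^d = (q⁸ z² + q¹² z³) · ∏_{i=2}^{n} (q^{3i+3} z + q^{6i+2}(1 + q + q²) z² + q^{9i+3} z³), where the left-hand sum has finitely many nonzero terms. -/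
/-!
Appending the largest part `m ≥ 4` to a basal partition with largest part `m - 1`, `m - 2`, or
(when `3 ∣ m`) `m - 3` is a bijection onto the basal partitions with largest part `m`. Hence
`U m = ∑_d t(d, m) z^d` (`basalGF m` below) satisfies
`U m = q^m z (U (m-1) + U (m-2) + [3 ∣ m] U (m-3))`.
Eliminating `U (3n)` and `U (3n+1)` from three consecutive instances gives
`U (3n+2) = (q^{3n+3} z + q^{6n+2} (1 + q + q²) z² + q^{9n+3} z³) U (3n-1)` for `n ≥ 2`,
and `U 5 = q⁸z² + q¹²z³` starts the product.
-/

theorem isBasalP32_iff {l : List ℕ} :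
    IsBasalP32 l ↔
      l.head? = some 3 ∧ l.IsChain (fun a b => a < b ∧ b - a ≤ if b % 3 = 0 then 3 else 2) :=
  Iff.rfl

namespace IsBasalP32

variable {l : List ℕ} {m : ℕ}

theorem ne_nil (h : IsBasalP32 l) : l ≠ [] := by
  rintro rfl
  simp [IsBasalP32] at h

theorem pairwise_lt (h : IsBasalP32 l) : l.Pairwise (· < ·) :=
  List.isChain_iff_pairwise.mp (h.2.imp fun _ _ hab => hab.1)

theorem three_le {x : ℕ} (h : IsBasalP32 l) (hx : x ∈ l) : 3 ≤ x := by
  obtain ⟨a, l', rfl⟩ := List.exists_cons_of_ne_nil h.ne_nil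
  obtain rfl : a = 3 := by simpa using h.1
  rcases List.mem_cons.mp hx with rfl | hx
  · rfl
  · exact (List.rel_of_pairwise_cons h.pairwise_lt hx).le

theorem le_of_getLast? {x : ℕ} (h : IsBasalP32 l) (hm : l.getLast? = some m) (hx : x ∈ l) :
    x ≤ m := by
  obtain ⟨l', rfl⟩ := List.getLast?_eq_some_iff.mp hm
  rcases List.mem_append.mp hx with hx | hx
  · exact ((List.pairwise_append.mp h.pairwise_lt).2.2 x hx m (by simp)).le
  · simp_all

theorem length_add_two_le (h : IsBasalP32 l) (hm : l.getLast? = some m) :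
    l.length + 2 ≤ m := by
  have hsub : l.toFinset ⊆ Finset.Icc 3 m := fun x hx => by
    rw [List.mem_toFinset] at hx
    exact Finset.mem_Icc.mpr ⟨h.three_le hx, h.le_of_getLast? hm hx⟩
  have hcard := Finset.card_le_card hsub
  rw [List.toFinset_card_of_nodup h.pairwise_lt.nodup, Nat.card_Icc] at hcard
  have hpos := List.length_pos_of_ne_nil h.ne_nil
  omega

theorem singleton_iff : IsBasalP32 [m] ↔ m = 3 := by
  simp [isBasalP32_iff]

theorem append_singleton_iff (hl : l ≠ []) :
    IsBasalP32 (l ++ [m]) ↔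
      IsBasalP32 l ∧ ∃ k, l.getLast? = some k ∧ k < m ∧ m - k ≤ if m % 3 = 0 then 3 else 2 := by
  obtain ⟨k, hk⟩ := Option.ne_none_iff_exists'.mp (mt List.getLast?_eq_none_iff.mp hl)
  simp [isBasalP32_iff, List.head?_append_of_ne_nil _ hl, List.isChain_append, hk, and_assoc]

end IsBasalP32

def basalOfLast : ℕ → Finset (List ℕ)
  | 0 | 1 | 2 => ∅
  | 3 => {[3]}
  | m + 4 =>
    (basalOfLast (m + 3) ∪ basalOfLast (m + 2) ∪
      if (m + 4) % 3 = 0 then basalOfLast (m + 1) else ∅).image (· ++ [m + 4])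

theorem mem_basalOfLast {m : ℕ} {l : List ℕ} :
    l ∈ basalOfLast m ↔ IsBasalP32 l ∧ l.getLast? = some m := by
  induction m using basalOfLast.induct generalizing l with
  | case1 | case2 | case3 =>
    simp only [basalOfLast, Finset.notMem_empty, false_iff, not_and]
    intro h hm
    have := h.three_le (List.mem_of_getLast? hm)
    omega
  | case4 =>
    simp only [basalOfLast, Finset.mem_singleton]
    refine ⟨by rintro rfl; exact ⟨IsBasalP32.singleton_iff.mpr rfl, rfl⟩, fun ⟨h, hm⟩ => ?_⟩
    obtain ⟨l', rfl⟩ := List.getLast?_eq_some_iff.mp hm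
    rcases eq_or_ne l' [] with rfl | hl'
    · rfl
    · obtain ⟨h', k, hk, hk3, -⟩ := (IsBasalP32.append_singleton_iff hl').mp h
      have := h'.three_le (List.mem_of_getLast? hk)
      omega
  | case5 m ih₃ ih₂ ih₁ =>
    simp only [basalOfLast, Finset.mem_image, Finset.mem_union]
    constructor
    · rintro ⟨l', hl', rfl⟩
      obtain ⟨k, ⟨h', hk⟩, hkm, hgap⟩ : ∃ k, (IsBasalP32 l' ∧ l'.getLast? = some k) ∧
          k < m + 4 ∧ m + 4 - k ≤ if (m + 4) % 3 = 0 then 3 else 2 := by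
        split_ifs at hl' ⊢
        · rcases hl' with (hl' | hl') | hl'
          exacts [⟨_, ih₃.mp hl', by omega, by omega⟩, ⟨_, ih₂.mp hl', by omega, by omega⟩,
            ⟨_, ih₁.mp hl', by omega, by omega⟩]
        · rcases hl' with (hl' | hl') | hl'
          exacts [⟨_, ih₃.mp hl', by omega, by omega⟩, ⟨_, ih₂.mp hl', by omega, by omega⟩,
            absurd hl' (Finset.notMem_empty _)]
      have hl'ne := List.ne_nil_of_mem (List.mem_of_getLast? hk)
      exact ⟨(IsBasalP32.append_singleton_iff hl'ne).mpr ⟨h', k, hk, hkm, hgap⟩, by simp⟩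
    · rintro ⟨h, hm⟩
      obtain ⟨l', rfl⟩ := List.getLast?_eq_some_iff.mp hm
      have hl' : l' ≠ [] := by
        rintro rfl
        have := IsBasalP32.singleton_iff.mp h
        omega
      obtain ⟨h', k, hk, hkm, hgap⟩ := (IsBasalP32.append_singleton_iff hl').mp h
      refine ⟨l', ?_, rfl⟩
      split_ifs at hgap ⊢ with h3
      · obtain rfl | rfl | rfl : k = m + 3 ∨ k = m + 2 ∨ k = m + 1 := by omega
        exacts [Or.inl (Or.inl (ih₃.mpr ⟨h', hk⟩)), Or.inl (Or.inr (ih₂.mpr ⟨h', hk⟩)),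
          Or.inr (ih₁.mpr ⟨h', hk⟩)]
      · obtain rfl | rfl : k = m + 3 ∨ k = m + 2 := by omega
        exacts [Or.inl (Or.inl (ih₃.mpr ⟨h', hk⟩)), Or.inl (Or.inr (ih₂.mpr ⟨h', hk⟩))]

theorem disjoint_basalOfLast {i j : ℕ} (hij : i ≠ j) :
    Disjoint (basalOfLast i) (basalOfLast j) :=
  Finset.disjoint_left.mpr fun _ hi hj =>
    hij (Option.some_injective _ <|
      (mem_basalOfLast.mp hi).2.symm.trans (mem_basalOfLast.mp hj).2)

open Polynomial

noncomputable def basalGF (m : ℕ) : ℤ[X][X] :=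
  ∑ l ∈ basalOfLast m, C (X ^ l.sum) * X ^ l.length

theorem basalGF_add_four (m : ℕ) :
    basalGF (m + 4) = C (X ^ (m + 4)) * X *
      (basalGF (m + 3) + basalGF (m + 2) + if (m + 4) % 3 = 0 then basalGF (m + 1) else 0) := by
  have happend (l : List ℕ) : C (X ^ (l ++ [m + 4]).sum) * X ^ (l ++ [m + 4]).length =
      C (X ^ (m + 4)) * X * (C (X ^ l.sum) * X ^ l.length : ℤ[X][X]) := by
    simp only [List.sum_append, List.sum_singleton, List.length_append, List.length_singleton,
      pow_add, pow_one, map_mul]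
    ring
  rw [basalGF, basalOfLast, Finset.sum_image fun _ _ _ _ h => List.append_left_injective _ h]
  simp_rw [happend, ← Finset.mul_sum]
  congr 1
  rw [Finset.sum_union, Finset.sum_union (disjoint_basalOfLast (by omega))]
  · split_ifs <;> simp [basalGF]
  · split_ifs
    · exact Finset.disjoint_union_left.mpr
        ⟨disjoint_basalOfLast (by omega), disjoint_basalOfLast (by omega)⟩
    · exact Finset.disjoint_empty_right _

theorem t_eq_sum_basalOfLast (d m : ℕ) :
    t d m = ∑ l ∈ basalOfLast m with l.length = d, X ^ l.sum := by
  classical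
  let enc : (Fin d → Fin (m + 1)) → List ℕ := fun f => List.ofFn fun i => (f i : ℕ)
  have enc_injective : enc.Injective := fun f g h =>
    funext fun i => Fin.ext (congrFun (List.ofFn_injective h) i)
  rw [t, ← Finset.sum_filter]
  refine (Finset.sum_image (f := fun l => (X : ℤ[X]) ^ l.sum) enc_injective.injOn).symm.trans
    (Finset.sum_congr (Finset.ext fun l => ?_) fun _ _ => rfl)
  simp only [Finset.mem_image, Finset.mem_filter, Finset.mem_univ, true_and, mem_basalOfLast]
  constructor
  · rintro ⟨f, hf, rfl⟩
    exact ⟨hf, List.length_ofFn⟩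
  · rintro ⟨⟨h, hm⟩, rfl⟩
    refine ⟨fun i => ⟨l[i.val], Nat.lt_succ_of_le (h.le_of_getLast? hm (List.getElem_mem _))⟩, ?_⟩
    simpa only [enc, List.ofFn_getElem, and_true] using ⟨h, hm⟩

theorem t_eq_zero_of_lt {d m : ℕ} (h : m < d + 2) : t d m = 0 := by
  rw [t_eq_sum_basalOfLast]
  refine Finset.sum_eq_zero fun l hl => absurd h (not_lt.mpr ?_)
  obtain ⟨hmem, rfl⟩ := Finset.mem_filter.mp hl
  exact (mem_basalOfLast.mp hmem).elim IsBasalP32.length_add_two_le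

theorem basalGF_eq_sum_t {m M : ℕ} (hm : m ≤ M + 2) :
    basalGF m = ∑ d ∈ Finset.Icc 1 M, C (t d m) * X ^ d := by
  have hlength : ∀ l ∈ basalOfLast m, l.length ∈ Finset.Icc 1 M := fun l hl => by
    obtain ⟨h, hl⟩ := mem_basalOfLast.mp hl
    have := h.length_add_two_le hl
    have := List.length_pos_of_ne_nil h.ne_nil
    exact Finset.mem_Icc.mpr ⟨by omega, by omega⟩
  simp_rw [t_eq_sum_basalOfLast, map_sum, Finset.sum_mul]
  rw [basalGF, ← Finset.sum_fiberwise_of_maps_to hlength]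
  refine Finset.sum_congr rfl fun d _ => Finset.sum_congr rfl fun l hl => ?_
  rw [(Finset.mem_filter.mp hl).2]

noncomputable def stepFactor (i : ℕ) : ℤ[X][X] :=
  C (X ^ (3 * i + 3)) * X + C (X ^ (6 * i + 2) * (1 + X + X ^ 2)) * X ^ 2 +
    C (X ^ (9 * i + 3)) * X ^ 3

theorem basalGF_five : basalGF 5 = C (X ^ 8) * X ^ 2 + C (X ^ 12) * X ^ 3 := by
  have : basalOfLast 5 = {[3, 4, 5], [3, 5]} := by decide
  rw [basalGF, this, Finset.sum_pair (by decide)]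
  norm_num [add_comm]

theorem basalGF_three_mul_add_eight (k : ℕ) :
    basalGF (3 * k + 8) = basalGF (3 * k + 5) * stepFactor (k + 2) := by
  have h5 := basalGF_add_four (3 * k + 1)
  have h6 := basalGF_add_four (3 * k + 2)
  have h7 := basalGF_add_four (3 * k + 3)
  have h8 := basalGF_add_four (3 * k + 4)
  simp only [add_assoc, Nat.reduceAdd, Nat.mul_add_mod_self_left, Nat.reduceMod,
    OfNat.ofNat_ne_zero, one_ne_zero, reduceIte, add_zero, map_pow] at h5 h6 h7 h8
  have h6' : basalGF (3 * k + 6) = (C X ^ (3 * k + 6) * X + C X) * basalGF (3 * k + 5) := by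
    linear_combination h6 - C X * h5
  rw [h8, h7, h6', stepFactor]
  simp only [map_pow, map_mul, map_add, map_one]
  ring

theorem basalGF_three_mul_add_two {n : ℕ} (hn : 1 ≤ n) :
    basalGF (3 * n + 2) = basalGF 5 * ∏ i ∈ Finset.Icc 2 n, stepFactor i := by
  induction n, hn using Nat.le_induction with
  | base => simp
  | succ n hn ih =>
    obtain ⟨k, rfl⟩ := Nat.exists_eq_add_of_le' hn
    rw [Finset.prod_Icc_succ_top (by omega), ← mul_assoc, ← ih]
    exact basalGF_three_mul_add_eight k

/-- For every `n ≥ 1`, in `ℤ[q][z]` (with `z` the outer variable, `q` the inner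
one): `∑_{d≥1} t(d, 3n+2)·z^d
  = (q⁸z² + q¹²z³)·∏_{i=2}^{n}(q^{3i+3}z + q^{6i+2}(1+q+q²)z² + q^{9i+3}z³)`;
the sum on the left has finitely many nonzero terms (indeed `t(d, 3n+2) = 0`
for `d > 3n+2`), so it may be taken over `1 ≤ d ≤ 3n+2`. -/
theorem t_generating_product (n : ℕ) (hn : 1 ≤ n) :
    (∀ d : ℕ, 3 * n + 2 < d → t d (3 * n + 2) = 0) ∧
    ∑ d ∈ Finset.Icc 1 (3 * n + 2),
        (C (t d (3 * n + 2)) * X ^ d : Polynomial (Polynomial ℤ)) =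
      (C ((X : Polynomial ℤ) ^ 8) * X ^ 2 + C ((X : Polynomial ℤ) ^ 12) * X ^ 3) *
        ∏ i ∈ Finset.Icc 2 n,
          (C ((X : Polynomial ℤ) ^ (3 * i + 3)) * X +
            C ((X : Polynomial ℤ) ^ (6 * i + 2) * (1 + X + X ^ 2)) * X ^ 2 +
            C ((X : Polynomial ℤ) ^ (9 * i + 3)) * X ^ 3) := by
  refine ⟨fun d hd => t_eq_zero_of_lt (by omega), ?_⟩
  rw [← basalGF_eq_sum_t (by omega), basalGF_three_mul_add_two hn, basalGF_five]
  rfl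
end
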